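/- arXiv:1305.0184 — 8 statements merged into one kernel-verified Lean document; each statement's English description precedes it below -/
import Mathlib

section
/- For any z ∈ ℂ and any measurable function m : ℝ → ℝ with 0 < c ≤ m(t) ≤ C, the integral ∫_ℝ |log|1 - z/t| + χ(t)·Re(z)/t| · m(t) dt is finite, where χ(t) = 1 - 1_{[-1,1]}(t). -/
/-!
On a bounded interval the kernel `log ‖1 - z/t‖ + χ(t) Re z / t` is the logarithm of the norm of
the real-meromorphic function `t ↦ 1 - z/t` plus a bounded term, hence integrable. For large `|t|`,
with `w = -z/t`, the correction `χ(t) Re z / t = -Re w` cancels the linear term of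
`log ‖1 + w‖ = Re (log (1 + w))`, so the kernel is `O(|z|² / t²)`. Multiplying by the bounded
weight `m` preserves integrability.
-/

open MeasureTheory

/-- `χ(t) = 1 - 1_{[-1,1]}(t)`. -/
noncomputable def chi (t : ℝ) : ℝ := if t ∈ Set.Icc (-1 : ℝ) 1 then 0 else 1

@[fun_prop]
lemma measurable_chi : Measurable chi :=
  Measurable.ite measurableSet_Icc measurable_const measurable_const

lemma chi_of_one_lt_abs {t : ℝ} (ht : 1 < |t|) : chi t = 1 := by
  rw [chi, if_neg (by rwa [Set.mem_Icc, ← abs_le, not_le])]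

lemma abs_chi_mul_div_le (a t : ℝ) : |chi t * a / t| ≤ |a| := by
  by_cases ht : t ∈ Set.Icc (-1 : ℝ) 1
  · simp [chi, ht]
  · rw [chi, if_neg ht, one_mul, abs_div]
    rw [Set.mem_Icc, ← abs_le, not_le] at ht
    exact div_le_self (abs_nonneg a) ht.le

lemma Complex.abs_log_norm_one_add_sub_re_le {w : ℂ} (hw : ‖w‖ ≤ 1 / 2) :
    |Real.log ‖1 + w‖ - w.re| ≤ ‖w‖ ^ 2 := by
  have hw1 : ‖w‖ < 1 := hw.trans_lt one_half_lt_one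
  have hinv : (1 - ‖w‖)⁻¹ ≤ 2 := by
    rw [inv_le_comm₀ (by linarith) two_pos]
    linarith
  calc |Real.log ‖1 + w‖ - w.re| = |(log (1 + w) - w).re| := by rw [sub_re, log_re]
    _ ≤ ‖log (1 + w) - w‖ := abs_re_le_norm _
    _ ≤ ‖w‖ ^ 2 * (1 - ‖w‖)⁻¹ / 2 := norm_log_one_add_sub_self_le hw1
    _ ≤ ‖w‖ ^ 2 := by nlinarith [sq_nonneg ‖w‖]

/-- The integrand of the modified logarithmic potential `ω_m(z) = ∫ logKernel z t * m t dt`. -/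
noncomputable def logKernel (z : ℂ) (t : ℝ) : ℝ :=
  Real.log ‖1 - z / (t : ℂ)‖ + chi t * z.re / t

lemma measurable_logKernel (z : ℂ) : Measurable (logKernel z) := by
  unfold logKernel; fun_prop

lemma abs_logKernel_le {z : ℂ} {t : ℝ} (ht : 1 < |t|) (hzt : 2 * ‖z‖ ≤ |t|) :
    |logKernel z t| ≤ 2 * ‖z‖ ^ 2 * (1 + t ^ 2)⁻¹ := by
  have ht0 : 0 < |t| := one_pos.trans ht
  set w : ℂ := -(z / t)
  have hw : ‖w‖ = ‖z‖ / |t| := by simp [w, Complex.norm_real]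
  have hw_half : ‖w‖ ≤ 1 / 2 := by
    rw [hw, div_le_iff₀ ht0]
    linarith
  have hkernel : logKernel z t = Real.log ‖1 + w‖ - w.re := by
    simp [logKernel, w, chi_of_one_lt_abs ht, sub_eq_add_neg, Complex.div_ofReal_re]
  rw [hkernel]
  refine (Complex.abs_log_norm_one_add_sub_re_le hw_half).trans ?_
  have hinv : (t ^ 2)⁻¹ ≤ 2 * (1 + t ^ 2)⁻¹ := by
    have ht2 : 1 ≤ t ^ 2 := by nlinarith [sq_abs t]
    rw [← div_eq_mul_inv, inv_le_comm₀ (by positivity) (by positivity), inv_div]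
    linarith
  calc ‖w‖ ^ 2 = (‖z‖ / |t|) ^ 2 := by rw [hw]
    _ = ‖z‖ ^ 2 * (t ^ 2)⁻¹ := by rw [div_pow, sq_abs, div_eq_mul_inv]
    _ ≤ ‖z‖ ^ 2 * (2 * (1 + t ^ 2)⁻¹) := by gcongr
    _ = 2 * ‖z‖ ^ 2 * (1 + t ^ 2)⁻¹ := by ring

lemma integrableOn_logKernel_Icc (z : ℂ) (a b : ℝ) :
    IntegrableOn (logKernel z) (Set.Icc a b) := by
  have hmero : MeromorphicOn (fun t : ℝ => 1 - z / (t : ℂ)) (Set.uIcc a b) :=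
    (MeromorphicOn.const 1).sub ((MeromorphicOn.const z).div
      (Complex.ofRealCLM.analyticOnNhd _).meromorphicOn)
  have hlog : IntegrableOn (fun t : ℝ => Real.log ‖1 - z / (t : ℂ)‖) (Set.Icc a b) :=
    ((intervalIntegrable_iff' (by finiteness)).1 hmero.intervalIntegrable_log_norm).mono_set
      Set.Icc_subset_uIcc
  have hcorr : IntegrableOn (fun t => chi t * z.re / t) (Set.Icc a b) :=
    Measure.integrableOn_of_bounded measure_Icc_lt_top.ne
      (by fun_prop : Measurable fun t => chi t * z.re / t).aestronglyMeasurable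
      (ae_of_all _ fun t => abs_chi_mul_div_le z.re t)
  exact hlog.add hcorr

lemma integrable_logKernel (z : ℂ) : Integrable (logKernel z) := by
  set T := 1 + 2 * ‖z‖
  have htail : IntegrableOn (logKernel z) (Set.Icc (-T) T)ᶜ := by
    refine (integrable_inv_one_add_sq.const_mul (2 * ‖z‖ ^ 2)).integrableOn.mono'
      (measurable_logKernel z).aestronglyMeasurable.restrict ?_
    refine (ae_restrict_iff' measurableSet_Icc.compl).2 (ae_of_all _ fun t ht => ?_)
    rw [Set.mem_compl_iff, Set.mem_Icc, ← abs_le, not_le] at ht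
    exact abs_logKernel_le (by linarith [norm_nonneg z]) (by linarith)
  simpa using (integrableOn_logKernel_Icc z (-T) T).union htail

theorem stmt1_general (z : ℂ) (m : ℝ → ℝ) (c C : ℝ) (hm : Measurable m)
    (hlb : ∀ t, c ≤ m t) (hub : ∀ t, m t ≤ C) :
    Integrable (fun t : ℝ =>
      |Real.log ‖1 - z / (t : ℂ)‖ + chi t * z.re / t| * m t) := by
  exact (integrable_logKernel z).abs.mul_bdd hm.aestronglyMeasurable
    (ae_of_all _ fun t => abs_le_max_abs_abs (hlb t) (hub t))

theorem stmt1 (z : ℂ) (m : ℝ → ℝ) (c C : ℝ) (hc : 0 < c) (hm : Measurable m)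
    (hlb : ∀ t, c ≤ m t) (hub : ∀ t, m t ≤ C) :
    Integrable (fun t : ℝ =>
      |Real.log ‖1 - z / (t : ℂ)‖ + chi t * z.re / t| * m t) :=
  stmt1_general z m c C hm hlb hub
end

section
/- Let m be measurable with 0 < c ≤ m ≤ C, let x_k be the partition with ∫_{x_k}^{x_{k+1}} m = 1, and set ξ_k = ∫_{x_k}^{x_{k+1}} t·m(t) dt. Then ξ_k ∈ (x_k, x_{k+1}), the distance of ξ_k to {x_k, x_{k+1}} is bounded below by a positive constant depending only on c, C, and ξ_{k+1} - ξ_k is bounded above and below by positive constants. -/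
open MeasureTheory intervalIntegral

theorem stmt6 (m : ℝ → ℝ) (c C : ℝ) (hc : 0 < c) (hm : Measurable m)
    (hlb : ∀ t, c ≤ m t) (hub : ∀ t, m t ≤ C)
    (x : ℤ → ℝ) (hx0 : x 0 = 0) (hmono : StrictMono x)
    (hcell : ∀ k : ℤ, ∫ t in x k..x (k + 1), m t = 1)
    (ξ : ℤ → ℝ) (hξ : ∀ k : ℤ, ξ k = ∫ t in x k..x (k + 1), t * m t) :
    (∀ k : ℤ, x k < ξ k ∧ ξ k < x (k + 1)) ∧
      (∃ d : ℝ, 0 < d ∧ ∀ k : ℤ, d ≤ ξ k - x k ∧ d ≤ x (k + 1) - ξ k) ∧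
      (∃ e E : ℝ, 0 < e ∧ ∀ k : ℤ, e ≤ ξ (k + 1) - ξ k ∧ ξ (k + 1) - ξ k ≤ E) := by
  have hcC : c ≤ C := (hlb 0).trans (hub 0)
  have hCpos : 0 < C := hc.trans_le hcC
  have intM : ∀ a b : ℝ, IntervalIntegrable m volume a b := by
    intro a b
    refine (_root_.intervalIntegrable_const (c := C)).mono_fun hm.aestronglyMeasurable
      (Filter.Eventually.of_forall fun t => ?_)
    show ‖m t‖ ≤ ‖C‖
    rw [Real.norm_eq_abs, Real.norm_eq_abs, abs_of_pos (hc.trans_le (hlb t)),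
      abs_of_pos hCpos]
    exact hub t
  have intTM : ∀ a b : ℝ, IntervalIntegrable (fun t => t * m t) volume a b := by
    intro a b
    refine (_root_.intervalIntegrable_const (c := (|a| + |b|) * C)).mono_fun
      (measurable_id.mul hm).aestronglyMeasurable ?_
    filter_upwards [ae_restrict_mem measurableSet_uIoc] with t ht
    obtain ⟨ht1, ht2⟩ := ht
    have hmt : 0 < m t := hc.trans_le (hlb t)
    have habs : |t| ≤ |a| + |b| := by
      rw [abs_le]
      constructor
      · have : -(|a| + |b|) ≤ a ⊓ b :=
          le_inf (by linarith [neg_abs_le a, abs_nonneg b]) (by linarith [neg_abs_le b, abs_nonneg a])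
        linarith
      · have : a ⊔ b ≤ |a| + |b| :=
          sup_le (by linarith [le_abs_self a, abs_nonneg b]) (by linarith [le_abs_self b, abs_nonneg a])
        linarith
    show ‖t * m t‖ ≤ ‖(|a| + |b|) * C‖
    rw [Real.norm_eq_abs, Real.norm_eq_abs, abs_mul, abs_of_pos hmt,
      abs_of_nonneg (by positivity : (0:ℝ) ≤ (|a| + |b|) * C)]
    exact mul_le_mul habs (hub t) hmt.le (by positivity)
  set d : ℝ := c / (2 * C ^ 2) with hd
  have hdpos : 0 < d := by positivity
  have key : ∀ k : ℤ, d ≤ ξ k - x k ∧ d ≤ x (k + 1) - ξ k ∧ x (k + 1) - x k ≤ 1 / c := by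
    intro k
    set a := x k with ha
    set b := x (k + 1) with hb
    have hab : a < b := hmono (lt_add_one k)
    have hI : ∫ t in a..b, m t = 1 := hcell k
    have hlen1 : 1 ≤ C * (b - a) := by
      have h := intervalIntegral.integral_mono_on hab.le (intM a b)
        (_root_.intervalIntegrable_const (c := C)) (fun t _ => hub t)
      rw [hI, intervalIntegral.integral_const, smul_eq_mul] at h
      linarith
    have hlen2 : c * (b - a) ≤ 1 := by
      have h := intervalIntegral.integral_mono_on hab.le
        (_root_.intervalIntegrable_const (c := c)) (intM a b) (fun t _ => hlb t)
      rw [hI, intervalIntegral.integral_const, smul_eq_mul] at h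
      linarith
    have hba' : b - a ≤ 1 / c := by
      rw [le_div_iff₀ hc]; linarith
    have hquad : d ≤ c * ((b - a) ^ 2 / 2) := by
      rw [hd, div_le_iff₀ (by positivity : (0:ℝ) < 2 * C ^ 2)]
      have hsq : 1 ≤ (C * (b - a)) * (C * (b - a)) := by nlinarith [hlen1]
      nlinarith [mul_le_mul_of_nonneg_left hsq hc.le]
    -- integrability of (t - a) * m t and (b - t) * m t
    have intL : IntervalIntegrable (fun t => (t - a) * m t) volume a b := by
      have h := (intTM a b).sub ((intM a b).const_mul a)
      simpa [sub_mul] using h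
    have intR : IntervalIntegrable (fun t => (b - t) * m t) volume a b := by
      have h := ((intM a b).const_mul b).sub (intTM a b)
      simpa [sub_mul] using h
    -- identities
    have hid : ∫ t in a..b, (t : ℝ) - a = (b - a) ^ 2 / 2 := by
      have h := intervalIntegral.integral_comp_sub_right (a := a) (b := b) (fun x => x) a
      rw [h, sub_self, integral_id]
      ring
    have hid2 : ∫ t in a..b, b - t = (b - a) ^ 2 / 2 := by
      have h := intervalIntegral.integral_comp_sub_left (a := a) (b := b) (fun x => x) b
      rw [h, sub_self, integral_id]
      ring
    have hξa : ξ k - a = ∫ t in a..b, (t - a) * m t := by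
      have hsplit : ∫ t in a..b, (t - a) * m t
          = (∫ t in a..b, t * m t) - ∫ t in a..b, a * m t := by
        rw [← intervalIntegral.integral_sub (intTM a b) ((intM a b).const_mul a)]
        congr 1
        ext t
        ring
      rw [hsplit, intervalIntegral.integral_const_mul, hI, hξ k]
      ring
    have hξb : b - ξ k = ∫ t in a..b, (b - t) * m t := by
      have hsplit : ∫ t in a..b, (b - t) * m t
          = (∫ t in a..b, b * m t) - ∫ t in a..b, t * m t := by
        rw [← intervalIntegral.integral_sub ((intM a b).const_mul b) (intTM a b)]
        congr 1
        ext t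
        ring
      rw [hsplit, intervalIntegral.integral_const_mul, hI, hξ k]
      ring
    refine ⟨?_, ?_, hba'⟩
    · have hmonoI : ∫ t in a..b, c * (t - a) ≤ ∫ t in a..b, (t - a) * m t := by
        refine intervalIntegral.integral_mono_on hab.le
          ((continuous_const.mul (continuous_id.sub continuous_const)).intervalIntegrable a b)
          intL (fun t ht => ?_)
        have h1 : 0 ≤ t - a := by linarith [ht.1]
        nlinarith [hlb t]
      rw [intervalIntegral.integral_const_mul, hid] at hmonoI
      rw [hξa] at *
      linarith
    · have hmonoI : ∫ t in a..b, c * (b - t) ≤ ∫ t in a..b, (b - t) * m t := by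
        refine intervalIntegral.integral_mono_on hab.le
          ((continuous_const.mul (continuous_const.sub continuous_id)).intervalIntegrable a b)
          intR (fun t ht => ?_)
        have h1 : 0 ≤ b - t := by linarith [ht.2]
        nlinarith [hlb t]
      rw [intervalIntegral.integral_const_mul, hid2] at hmonoI
      rw [hξb] at *
      linarith
  refine ⟨fun k => ⟨by linarith [(key k).1], by linarith [(key k).2.1]⟩,
    ⟨d, hdpos, fun k => ⟨(key k).1, (key k).2.1⟩⟩,
    ⟨2 * d, 2 / c, by linarith, fun k => ?_⟩⟩
  obtain ⟨h1, h2, h3⟩ := key k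
  obtain ⟨h4, h5, h6⟩ := key (k + 1)
  constructor
  · linarith
  · linarith [hdpos, (by ring : (1:ℝ)/c + 1/c = 2/c)]
end

section
/- With m, x_k, ξ_k as above, define μ = m(t)dt - ∑_k δ_{ξ_k}, f_μ(x) = μ((0, x]) (with sign convention for x < 0), and F_μ(x) = ∫_0^x f_μ(t) dt. Then f_μ(x_k) = 0 and F_μ(x_k) = 0 for all k, and both f_μ and F_μ are bounded on ℝ. -/
/-!
The atoms interlace with the nodes: `ξₖ` is the barycentre of the unit mass `m` carries on
`(xₖ, xₖ₊₁]`, so `xₖ < ξₖ < xₖ₊₁`. Counting unit masses and atoms then gives, on that cell,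
`f_μ(s) = ∫_{xₖ}^s m - 𝟙[ξₖ ≤ s]`, which lies in `[-1, 1]` and vanishes at `xₖ₊₁`.
By Fubini, `∫_{xₖ}^{xₖ₊₁} ∫_{xₖ}^t m dt = ∫_{xₖ}^{xₖ₊₁} (xₖ₊₁ - u) m(u) du = xₖ₊₁ - ξₖ`, which is
the integral of the step `𝟙[ξₖ ≤ t]`; so `f_μ` has mean zero on every cell and `F_μ(xₖ) = 0`.
Between two nodes `F_μ` then changes by at most the cell length, at most `1/c` since `m ≥ c`;
the bound `m ≤ C` makes the nodes unbounded in both directions, so the cells cover `ℝ`.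
-/

open MeasureTheory intervalIntegral Set

-- `∑ₖ δ_{ξₖ}((0, s])`, negated for `s < 0`: the atomic part of `f_μ`
noncomputable def signedCount (ξ : ℤ → ℝ) (s : ℝ) : ℝ :=
  if 0 ≤ s then ((ncard {k : ℤ | ξ k ∈ Ioc 0 s} : ℝ)) else -((ncard {k : ℤ | ξ k ∈ Ioc s 0} : ℝ))

lemma ncard_Ico_int {a b : ℤ} (h : a ≤ b) : ((Ico a b).ncard : ℝ) = b - a := by
  rw [← Finset.coe_Ico, ncard_coe_finset, Int.card_Ico, ← Int.cast_natCast,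
    Int.toNat_of_nonneg (by omega), Int.cast_sub]

section SignedCount

variable {ξ : ℤ → ℝ} {s : ℝ} {n : ℤ}

lemma signedCount_eq (h0 : ∀ j, ξ j ≤ 0 ↔ j < 0) (hs : ∀ j, ξ j ≤ s ↔ j < n) :
    signedCount ξ s = n := by
  unfold signedCount
  split_ifs with hs0
  · have hn : 0 ≤ n := by
      by_contra! h
      exact absurd ((hs (-1)).1 (((h0 (-1)).2 (by norm_num)).trans hs0)) (by omega)
    have : {k | ξ k ∈ Ioc 0 s} = Ico 0 n := by
      ext k; simp only [mem_ofPred_eq, mem_Ioc, mem_Ico, ← not_le, h0, hs]; omega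
    rw [this, ncard_Ico_int hn]; simp
  · have hn : n ≤ 0 := by
      by_contra! h
      exact absurd ((h0 0).1 (((hs 0).2 h).trans (not_le.1 hs0).le)) (by omega)
    have : {k | ξ k ∈ Ioc s 0} = Ico n 0 := by
      ext k; simp only [mem_ofPred_eq, mem_Ioc, mem_Ico, ← not_le, h0, hs]; omega
    rw [this, ncard_Ico_int hn]; simp

lemma monotone_signedCount (h0 : ∀ j, ξ j ≤ 0 ↔ j < 0)
    (h : ∀ s, ∃ n : ℤ, ∀ j, ξ j ≤ s ↔ j < n) : Monotone (signedCount ξ) := by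
  intro s t hst
  obtain ⟨n, hn⟩ := h s
  obtain ⟨n', hn'⟩ := h t
  rw [signedCount_eq h0 hn, signedCount_eq h0 hn', Int.cast_le]
  by_contra! hlt
  exact absurd ((hn' n').1 (((hn n').2 hlt).trans hst)) (lt_irrefl _)

end SignedCount

section Interlacing

variable {x ξ : ℤ → ℝ}

lemma le_iff_lt_of_mem_Ioc (hx : StrictMono x) (hξ : ∀ k, x k < ξ k ∧ ξ k < x (k + 1))
    {k : ℤ} {s : ℝ} (hs : s ∈ Ioc (x k) (x (k + 1))) (j : ℤ) :
    ξ j ≤ s ↔ j < k + if ξ k ≤ s then 1 else 0 := by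
  rcases lt_trichotomy j k with hjk | rfl | hkj
  · have : ξ j < s := (hξ j).2.trans_le ((hx.monotone (by omega)).trans hs.1.le)
    split_ifs <;> simp only [this.le, true_iff] <;> omega
  · split_ifs with h <;> simp [h]
  · have : s < ξ j := hs.2.trans_lt ((hx.monotone (by omega)).trans_lt (hξ j).1)
    split_ifs <;> simp only [this.not_ge, false_iff] <;> omega

lemma le_iff_lt_at_node (hx : StrictMono x) (hξ : ∀ k, x k < ξ k ∧ ξ k < x (k + 1))
    (n j : ℤ) : ξ j ≤ x n ↔ j < n := by
  constructor
  · intro h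
    by_contra! hnj
    exact (hx.monotone hnj).not_gt ((hξ j).1.trans_le h)
  · intro h
    exact ((hξ j).2.trans_le (hx.monotone (by omega))).le

end Interlacing

lemma exists_mem_Ioc_of_unbounded {x : ℤ → ℝ} (hx : Monotone x) (htop : ∀ s, ∃ n, s ≤ x n)
    (hbot : ∀ s, ∃ n, x n < s) (s : ℝ) : ∃ k, s ∈ Ioc (x k) (x (k + 1)) := by
  obtain ⟨b, hb⟩ := hbot s
  have hlow : ∀ n, s ≤ x n → b ≤ n := fun n hn => by
    by_contra! h
    exact (hx h.le).not_gt (hb.trans_le hn)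
  obtain ⟨n, hn, hleast⟩ := Int.exists_least_of_bdd ⟨b, hlow⟩ (htop s)
  refine ⟨n - 1, ?_, by simpa using hn⟩
  by_contra! h
  exact absurd (hleast _ h) (by omega)

lemma exists_lt_of_abs_le_mul {x : ℤ → ℝ} {C : ℝ} (hx : Monotone x)
    (h : ∀ n : ℤ, |(n : ℝ)| ≤ C * |x n - x 0|) (s : ℝ) : ∃ n, s < x n := by
  obtain ⟨n, hn⟩ := exists_nat_gt (|C| * |s - x 0|)
  refine ⟨n, ?_⟩
  have hxn : x 0 ≤ x n := hx (Int.natCast_nonneg n)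
  have := h n
  rw [abs_of_nonneg (sub_nonneg.2 hxn)] at this
  simp only [Int.cast_natCast, Nat.abs_cast] at this
  by_contra! hs
  have hC : C * (x n - x 0) ≤ |C| * |s - x 0| :=
    (mul_le_mul_of_nonneg_right (le_abs_self C) (sub_nonneg.2 hxn)).trans
      (mul_le_mul_of_nonneg_left ((sub_le_sub_right hs _).trans (le_abs_self _)) (abs_nonneg C))
  linarith

lemma exists_mem_Ioc_of_integral_eq {m : ℝ → ℝ} {x : ℤ → ℝ} {C : ℝ} (hx : Monotone x)
    (hC : ∀ t, |m t| ≤ C) (hmass : ∀ n : ℤ, ∫ t in x 0..x n, m t = n) (s : ℝ) :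
    ∃ k, s ∈ Ioc (x k) (x (k + 1)) := by
  have hgrowth : ∀ n : ℤ, |(n : ℝ)| ≤ C * |x n - x 0| := fun n => by
    simpa [hmass n] using norm_integral_le_of_norm_le_const (a := x 0) (b := x n)
      fun t _ => (Real.norm_eq_abs (m t)).trans_le (hC t)
  refine exists_mem_Ioc_of_unbounded hx
    (fun s => (exists_lt_of_abs_le_mul hx hgrowth s).imp fun _ => le_of_lt) (fun s => ?_) s
  -- the lower end, from the upper end of the reflected sequence `n ↦ -x (-n)`
  obtain ⟨n, hn⟩ := exists_lt_of_abs_le_mul (x := fun n => -x (-n))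
    (fun a b h => neg_le_neg (hx (neg_le_neg h)))
    (fun n => by
      have h := hgrowth (-n)
      rw [Int.cast_neg, abs_neg, abs_sub_comm] at h
      show |(n : ℝ)| ≤ C * |-x (-n) - -x (-0)|
      rwa [neg_zero, neg_sub_neg]) (-s)
  exact ⟨-n, by linarith⟩

lemma integral_eq_mul_of_cells {g : ℝ → ℝ} {x : ℤ → ℝ} {v : ℝ}
    (hg : ∀ a b, IntervalIntegrable g volume a b)
    (hcell : ∀ k, ∫ t in x k..x (k + 1), g t = v) (n : ℤ) :
    ∫ t in x 0..x n, g t = n * v := by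
  have hstep : ∀ k, ∫ t in x 0..x (k + 1), g t = (∫ t in x 0..x k, g t) + v := fun k => by
    rw [← integral_add_adjacent_intervals (hg _ (x k)) (hg _ _), hcell]
  induction n using Int.induction_on with
  | zero => simp
  | succ k ih => rw [hstep, ih]; push_cast; ring
  | pred k ih =>
    have := hstep (-k - 1)
    rw [sub_add_cancel, ih] at this
    push_cast at this ⊢
    linarith

lemma integral_sub_mul_eq_sub {m : ℝ → ℝ} {a b : ℝ} (hm : IntervalIntegrable m volume a b)
    (hmass : ∫ t in a..b, m t = 1) (c : ℝ) :
    ∫ t in a..b, (c - t) * m t = c - ∫ t in a..b, t * m t := by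
  simp_rw [sub_mul]
  rw [integral_sub (hm.const_mul c) (hm.continuousOn_mul (g := fun t => t) continuousOn_id),
    intervalIntegral.integral_const_mul, hmass, mul_one]

lemma integral_mul_mem_Ioo {m : ℝ → ℝ} {a b : ℝ} (hab : a < b)
    (hm : IntervalIntegrable m volume a b) (hpos : ∀ t ∈ Ioo a b, 0 < m t)
    (hmass : ∫ t in a..b, m t = 1) : (∫ t in a..b, t * m t) ∈ Ioo a b := by
  have hint : ∀ c : ℝ, IntervalIntegrable (fun t => (c - t) * m t) volume a b :=
    fun c => hm.continuousOn_mul (by fun_prop)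
  constructor
  · have := intervalIntegral_pos_of_pos_on (hint a).neg
      (fun t ht => by simpa [neg_mul_eq_neg_mul] using mul_pos (sub_pos.2 ht.1) (hpos t ht)) hab
    rw [Pi.neg_def, intervalIntegral.integral_neg, integral_sub_mul_eq_sub hm hmass] at this
    linarith
  · have := intervalIntegral_pos_of_pos_on (hint b)
      (fun t ht => mul_pos (sub_pos.2 ht.2) (hpos t ht)) hab
    rw [integral_sub_mul_eq_sub hm hmass] at this
    linarith

lemma sub_le_inv_of_integral_eq_one {m : ℝ → ℝ} {a b c : ℝ} (hab : a ≤ b) (hc : 0 < c)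
    (hm : IntervalIntegrable m volume a b) (hlb : ∀ t ∈ Icc a b, c ≤ m t)
    (hmass : ∫ t in a..b, m t = 1) : b - a ≤ c⁻¹ := by
  have := integral_mono_on hab intervalIntegrable_const hm hlb
  rw [intervalIntegral.integral_const, smul_eq_mul, hmass] at this
  rw [← one_div, le_div_iff₀ hc]
  linarith

lemma integral_integral_eq_integral_sub_mul {m : ℝ → ℝ} {a b : ℝ} (hab : a ≤ b)
    (hm : IntervalIntegrable m volume a b) :
    ∫ t in a..b, (∫ u in a..t, m u) = ∫ u in a..b, (b - u) * m u := by
  set μ := volume.restrict (Ioc a b)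
  let F : ℝ → ℝ → ℝ := fun t u => {p : ℝ × ℝ | p.2 ≤ p.1}.indicator (fun p => m p.2) (t, u)
  have hF : Integrable (Function.uncurry F) (μ.prod μ) := by
    have := (integrable_const (1 : ℝ)).mul_prod (μ := μ) hm.1
    simp only [one_mul] at this
    exact this.indicator (measurableSet_le measurable_snd measurable_fst)
  have hleft : ∀ t ∈ Ioc a b, ∫ u, F t u ∂μ = ∫ u in a..t, m u := fun t ht => by
    change ∫ u in Ioc a b, (Iic t).indicator m u = _
    rw [setIntegral_indicator measurableSet_Iic, Ioc_inter_Iic, min_eq_right ht.2,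
      integral_of_le ht.1.le]
  have hright : ∀ u ∈ Ioc a b, ∫ t, F t u ∂μ = (b - u) * m u := fun u hu => by
    change ∫ t in Ioc a b, (Ici u).indicator (fun _ => m u) t = _
    have : Ioc a b ∩ Ici u = Icc u b := by
      ext t; simp only [mem_inter_iff, mem_Ioc, mem_Ici, mem_Icc]
      constructor
      · rintro ⟨⟨-, h⟩, h'⟩; exact ⟨h', h⟩
      · rintro ⟨h, h'⟩; exact ⟨⟨hu.1.trans_le h, h'⟩, h⟩
    rw [setIntegral_indicator measurableSet_Ici, this, setIntegral_const,
      Real.volume_real_Icc_of_le hu.2, smul_eq_mul]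
  rw [integral_of_le hab, integral_of_le hab, ← setIntegral_congr_fun measurableSet_Ioc hleft,
    ← setIntegral_congr_fun measurableSet_Ioc hright]
  exact integral_integral_swap hF

lemma integral_ite_le {a b ξ : ℝ} (ha : a ≤ ξ) (hb : ξ ≤ b) :
    ∫ t in a..b, (if ξ ≤ t then (1 : ℝ) else 0) = b - ξ := by
  have hset : (Ici ξ ∩ Ioc a b : Set ℝ) =ᵐ[volume] (Ioc ξ b : Set ℝ) := by
    rw [← max_eq_right ha, ← Ioc_inter_Ioi, max_eq_right ha, inter_comm (Ioc a b)]
    exact (Ioi_ae_eq_Ici (μ := volume) (a := ξ)).symm.inter (ae_eq_refl _)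
  have hind : (fun t => if ξ ≤ t then (1 : ℝ) else 0) = (Ici ξ).indicator (fun _ => 1) := by
    ext t; simp [indicator_apply]
  rw [integral_of_le (ha.trans hb), hind, integral_indicator_const (1 : ℝ) measurableSet_Ici,
    measureReal_restrict_apply measurableSet_Ici, measureReal_congr hset,
    Real.volume_real_Ioc_of_le hb, smul_eq_mul, mul_one]

-- `f_μ` on a cell `(a, b]` of unit mass whose atom sits at `ξ`
noncomputable def cellProfile (m : ℝ → ℝ) (a ξ s : ℝ) : ℝ :=
  (∫ t in a..s, m t) - if ξ ≤ s then 1 else 0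

lemma integral_cellProfile {m : ℝ → ℝ} {a b ξ : ℝ} (ha : a ≤ ξ) (hb : ξ ≤ b)
    (hm : IntervalIntegrable m volume a b) (hmass : ∫ t in a..b, m t = 1)
    (hξ : ∫ t in a..b, t * m t = ξ) :
    ∫ s in a..b, cellProfile m a ξ s = 0 := by
  have hprim : IntervalIntegrable (fun t => ∫ u in a..t, m u) volume a b :=
    (continuousOn_primitive_interval' hm left_mem_uIcc).intervalIntegrable
  have hstep : Monotone fun t : ℝ => if ξ ≤ t then (1 : ℝ) else 0 := fun s t hst => by
    by_cases hs : ξ ≤ s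
    · simp [hs, hs.trans hst]
    · simp only [hs, if_false]; split_ifs <;> norm_num
  unfold cellProfile
  rw [integral_sub hprim (hstep.intervalIntegrable), integral_integral_eq_integral_sub_mul
    (ha.trans hb) hm, integral_ite_le ha hb, integral_sub_mul_eq_sub hm hmass, hξ, sub_self]

lemma abs_cellProfile_le_one {m : ℝ → ℝ} {a b ξ s : ℝ} (hm : IntervalIntegrable m volume a b)
    (hm0 : ∀ t ∈ Icc a b, 0 ≤ m t) (hmass : ∫ t in a..b, m t = 1) (hs : s ∈ Icc a b) :
    |cellProfile m a ξ s| ≤ 1 := by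
  have h0 : 0 ≤ ∫ t in a..s, m t :=
    integral_nonneg hs.1 fun t ht => hm0 t ⟨ht.1, ht.2.trans hs.2⟩
  have h1 : ∫ t in a..s, m t ≤ 1 := hmass ▸ integral_mono_interval le_rfl hs.1 hs.2
    ((ae_restrict_mem measurableSet_Ioc).mono fun t ht => hm0 t (Ioc_subset_Icc_self ht)) hm
  rw [cellProfile, abs_le]
  split_ifs <;> constructor <;> linarith

lemma sub_signedCount_eq_cellProfile {m : ℝ → ℝ} {x ξ : ℤ → ℝ} (hx0 : x 0 = 0)
    (hx : StrictMono x) (hξ : ∀ k, x k < ξ k ∧ ξ k < x (k + 1))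
    (hm : ∀ a b, IntervalIntegrable m volume a b) (hmass : ∀ n : ℤ, ∫ t in x 0..x n, m t = n)
    {k : ℤ} {s : ℝ} (hs : s ∈ Ioc (x k) (x (k + 1))) :
    (∫ t in (0 : ℝ)..s, m t) - signedCount ξ s = cellProfile m (x k) (ξ k) s := by
  rw [← hx0, ← integral_add_adjacent_intervals (hm _ (x k)) (hm _ s), hmass, cellProfile,
    signedCount_eq (by simpa [hx0] using le_iff_lt_at_node hx hξ 0) (le_iff_lt_of_mem_Ioc hx hξ hs)]
  push_cast
  ring

lemma intervalIntegrable_primitive_sub_signedCount {m : ℝ → ℝ} {ξ : ℤ → ℝ}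
    (hm : ∀ a b, IntervalIntegrable m volume a b) (h0 : ∀ j, ξ j ≤ 0 ↔ j < 0)
    (h : ∀ s, ∃ n : ℤ, ∀ j, ξ j ≤ s ↔ j < n) (a b : ℝ) :
    IntervalIntegrable (fun s => (∫ t in (0 : ℝ)..s, m t) - signedCount ξ s) volume a b :=
  ((continuous_primitive hm 0).intervalIntegrable a b).sub
    (monotone_signedCount h0 h).intervalIntegrable

lemma abs_integral_le_of_cells {g : ℝ → ℝ} {x : ℤ → ℝ} {M L : ℝ}
    (hg : ∀ a b, IntervalIntegrable g volume a b) (hM : ∀ s, |g s| ≤ M)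
    (hzero : ∀ k, ∫ t in x 0..x k, g t = 0) (hlen : ∀ k, x (k + 1) - x k ≤ L)
    {k : ℤ} {s : ℝ} (hs : s ∈ Ioc (x k) (x (k + 1))) : |∫ t in x 0..s, g t| ≤ M * L := by
  rw [← integral_add_adjacent_intervals (hg _ (x k)) (hg _ s), hzero, zero_add]
  calc |∫ t in x k..s, g t| ≤ M * |s - x k| :=
        norm_integral_le_of_norm_le_const fun t _ => (Real.norm_eq_abs (g t)).trans_le (hM t)
    _ ≤ M * L := mul_le_mul_of_nonneg_left
        (by rw [abs_of_pos (sub_pos.2 hs.1)]; linarith [hlen k, hs.2]) ((abs_nonneg _).trans (hM s))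

theorem stmt7 (m : ℝ → ℝ) (c C : ℝ) (hc : 0 < c) (hm : Measurable m)
    (hlb : ∀ t, c ≤ m t) (hub : ∀ t, m t ≤ C)
    (x : ℤ → ℝ) (hx0 : x 0 = 0) (hmono : StrictMono x)
    (hcell : ∀ k : ℤ, ∫ t in x k..x (k + 1), m t = 1)
    (ξ : ℤ → ℝ) (hξ : ∀ k : ℤ, ξ k = ∫ t in x k..x (k + 1), t * m t)
    (fμ Fμ : ℝ → ℝ)
    (hf : ∀ s : ℝ, fμ s = (∫ t in (0 : ℝ)..s, m t) -
      (if 0 ≤ s then ((Set.ncard {k : ℤ | ξ k ∈ Set.Ioc 0 s} : ℝ))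
        else -((Set.ncard {k : ℤ | ξ k ∈ Set.Ioc s 0} : ℝ))))
    (hF : ∀ s : ℝ, Fμ s = ∫ t in (0 : ℝ)..s, fμ t) :
    (∀ k : ℤ, fμ (x k) = 0 ∧ Fμ (x k) = 0) ∧
      ∃ B : ℝ, ∀ s : ℝ, |fμ s| ≤ B ∧ |Fμ s| ≤ B := by
  have hf : ∀ s, fμ s = (∫ t in (0 : ℝ)..s, m t) - signedCount ξ s := hf
  have hm0 : ∀ t, 0 < m t := fun t => hc.trans_le (hlb t)
  have hmC : ∀ t, |m t| ≤ C := fun t => (abs_of_pos (hm0 t)).trans_le (hub t)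
  have hmi : ∀ a b, IntervalIntegrable m volume a b := fun a b =>
    intervalIntegrable_const.mono_fun' hm.aestronglyMeasurable (ae_of_all _ hmC)
  have hxk : ∀ k, x k < x (k + 1) := fun k => hmono (lt_add_one k)
  have hξx : ∀ k, x k < ξ k ∧ ξ k < x (k + 1) := fun k =>
    hξ k ▸ integral_mul_mem_Ioo (hxk k) (hmi _ _) (fun t _ => hm0 t) (hcell k)
  have hmass : ∀ n : ℤ, ∫ t in x 0..x n, m t = n := fun n => by
    simpa using integral_eq_mul_of_cells hmi hcell n
  have hcover := exists_mem_Ioc_of_integral_eq hmono.monotone hmC hmass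
  have hξ0 : ∀ j, ξ j ≤ 0 ↔ j < 0 := by simpa [hx0] using le_iff_lt_at_node hmono hξx 0
  have hfcell : ∀ k, ∀ s ∈ Ioc (x k) (x (k + 1)), fμ s = cellProfile m (x k) (ξ k) s :=
    fun k s hs => (hf s).trans (sub_signedCount_eq_cellProfile hx0 hmono hξx hmi hmass hs)
  have hfb : ∀ s, |fμ s| ≤ 1 := fun s => by
    obtain ⟨k, hk⟩ := hcover s
    rw [hfcell k s hk]
    exact abs_cellProfile_le_one (hmi _ _) (fun t _ => (hm0 t).le) (hcell k)
      (Ioc_subset_Icc_self hk)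
  have hfi : ∀ a b, IntervalIntegrable fμ volume a b := funext hf ▸
    intervalIntegrable_primitive_sub_signedCount hmi hξ0 fun s =>
      (hcover s).elim fun _ hk => ⟨_, le_iff_lt_of_mem_Ioc hmono hξx hk⟩
  have hFx : ∀ n, ∫ t in x 0..x n, fμ t = 0 := fun n => by
    refine (integral_eq_mul_of_cells hfi (fun k => ?_) n).trans (mul_zero _)
    rw [integral_congr_Ioo_of_le (hxk k).le fun s hs => hfcell k s (Ioo_subset_Ioc_self hs)]
    exact integral_cellProfile (hξx k).1.le (hξx k).2.le (hmi _ _) (hcell k) (hξ k).symm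
  have hlen : ∀ k, x (k + 1) - x k ≤ c⁻¹ := fun k =>
    sub_le_inv_of_integral_eq_one (hxk k).le hc (hmi _ _) (fun t _ => hlb t) (hcell k)
  have hfx : ∀ n, fμ (x n) = 0 := fun n => by
    rw [hf, signedCount_eq hξ0 (le_iff_lt_at_node hmono hξx n), ← hmass, hx0, sub_self]
  refine ⟨fun k => ⟨hfx k, (hF _).trans (by simpa [hx0] using hFx k)⟩, max 1 c⁻¹, fun s =>
    ⟨(hfb s).trans (le_max_left _ _), ?_⟩⟩
  obtain ⟨k, hk⟩ := hcover s
  rw [hF, ← hx0]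
  exact (abs_integral_le_of_cells hfi hfb hFx hlen hk).trans (by simp)
end

section
/- Suppose f : ℝ → ℝ is twice differentiable with ‖f'‖_∞ < ∞, ‖f''‖_∞ < ∞, and |f(x) - f(x')| ≤ A|x-x'|^{1-ε} whenever |x - x'| ≥ R, for some A > 0, R > 1, ε ∈ (0,1). Then the Hilbert transform of f', given by the principal value H(f')(x) = (1/π)∫_0^∞ (f'(x-t) - f'(x+t))/t dt, exists for every x and satisfies π‖H(f')‖_∞ ≤ 2‖f''‖_∞ + 2 log R · ‖f'‖_∞ + (2A/R^ε)(1 + 1/ε). -/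
open MeasureTheory intervalIntegral

/-!
Write `g t = (f'(x - t) - f'(x + t)) / t` and `u t = f(x - t) + f(x + t) - 2 f(x)`, so that
`g t = -u'(t) / t`. On `(0, 1]` the mean value theorem for `f'` gives `|g| ≤ 2‖f''‖`, and on
`[1, R]` simply `|g t| ≤ 2‖f'‖ / t`. Beyond `R` we integrate by parts,
`∫_R^T g = u(R)/R - u(T)/T - ∫_R^T u(t)/t² dt`, and the growth condition gives
`|u t| ≤ 2A t^(1-ε)`: the boundary term at `T` vanishes in the limit, the one at `R` is at most
`2A/R^ε`, and `u/t²` is integrable on `(R, ∞)` with integral at most `2A/(ε R^ε)`.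
-/

open Filter Set Topology

theorem abs_sub_le_of_abs_deriv_le {f f' : ℝ → ℝ} {M : ℝ} (hf : ∀ x, HasDerivAt f (f' x) x)
    (hM : ∀ x, |f' x| ≤ M) (a b : ℝ) : |f a - f b| ≤ M * |a - b| := by
  simpa only [Real.norm_eq_abs] using convex_univ.norm_image_sub_le_of_norm_hasDerivWithin_le
    (fun y _ => (hf y).hasDerivWithinAt) (fun y _ => by simpa only [Real.norm_eq_abs] using hM y)
    (mem_univ b) (mem_univ a)

section Growth

variable {u : ℝ → ℝ} {C ε R t : ℝ}

theorem abs_div_pow_le_of_abs_le_rpow (ht : 0 < t) (hu : |u t| ≤ C * t ^ (1 - ε)) (n : ℕ) :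
    |u t / t ^ n| ≤ C * t ^ (1 - ε - n) := by
  rw [abs_div, abs_of_pos (pow_pos ht n), Real.rpow_sub ht, Real.rpow_natCast, ← mul_div_assoc]
  exact div_le_div_of_nonneg_right hu (pow_pos ht n).le

theorem abs_div_le_of_abs_le_rpow (ht : 0 < t) (hu : |u t| ≤ C * t ^ (1 - ε)) :
    |u t / t| ≤ C * t ^ (-ε) := by
  simpa only [pow_one, Nat.cast_one, sub_sub_cancel_left] using
    abs_div_pow_le_of_abs_le_rpow ht hu 1

theorem abs_div_sq_le_of_abs_le_rpow (ht : 0 < t) (hu : |u t| ≤ C * t ^ (1 - ε)) :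
    |u t / t ^ 2| ≤ C * t ^ (-1 - ε) := by
  simpa only [Nat.cast_ofNat, show (1 : ℝ) - ε - 2 = -1 - ε by ring] using
    abs_div_pow_le_of_abs_le_rpow ht hu 2

variable (hu : ∀ t, R ≤ t → |u t| ≤ C * t ^ (1 - ε))
include hu

theorem tendsto_div_atTop_zero_of_abs_le_rpow (hε : 0 < ε) :
    Tendsto (fun t => u t / t) atTop (𝓝 0) := by
  refine squeeze_zero_norm' ?_ (by simpa using (tendsto_rpow_neg_atTop hε).const_mul C)
  filter_upwards [eventually_ge_atTop R, eventually_gt_atTop 0] with t hRt ht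
  exact abs_div_le_of_abs_le_rpow ht (hu t hRt)

theorem integrableOn_Ioi_div_sq_of_abs_le_rpow (hu_meas : Measurable u) (hε : 0 < ε) (hR : 0 < R) :
    IntegrableOn (fun t => u t / t ^ 2) (Ioi R) := by
  refine ((integrableOn_Ioi_rpow_of_lt (a := -1 - ε) (by linarith) hR).const_mul C).mono'
    (hu_meas.div (measurable_id.pow_const 2)).aestronglyMeasurable ?_
  filter_upwards [ae_restrict_mem measurableSet_Ioi] with t ht
  exact abs_div_sq_le_of_abs_le_rpow (hR.trans ht) (hu t ht.le)

theorem abs_integral_Ioi_div_sq_le_of_abs_le_rpow (hε : 0 < ε) (hR : 0 < R) :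
    |∫ t in Ioi R, u t / t ^ 2| ≤ C / (ε * R ^ ε) := by
  have h := MeasureTheory.norm_integral_le_of_norm_le (f := fun t => u t / t ^ 2)
    ((integrableOn_Ioi_rpow_of_lt (a := -1 - ε) (by linarith) hR).const_mul C) <| by
      filter_upwards [ae_restrict_mem measurableSet_Ioi] with t ht
      exact abs_div_sq_le_of_abs_le_rpow (hR.trans ht) (hu t ht.le)
  rw [MeasureTheory.integral_const_mul, integral_Ioi_rpow_of_lt (by linarith) hR,
    show -1 - ε + 1 = -ε by ring, Real.rpow_neg hR.le] at h
  have : R ^ ε ≠ 0 := (Real.rpow_pos_of_pos hR ε).ne'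
  calc _ ≤ _ := h
    _ = C / (ε * R ^ ε) := by field_simp

end Growth

noncomputable def symmDiffQuot (f' : ℝ → ℝ) (x t : ℝ) : ℝ := (f' (x - t) - f' (x + t)) / t

def symmSecondDiff (f : ℝ → ℝ) (x t : ℝ) : ℝ := f (x - t) + f (x + t) - 2 * f x

section Symmetric

variable {f f' f'' : ℝ → ℝ} {x : ℝ}

theorem abs_symmDiffQuot_le_of_abs_deriv_le {M : ℝ} (hf' : ∀ y, HasDerivAt f' (f'' y) y)
    (hM : ∀ y, |f'' y| ≤ M) (t : ℝ) : |symmDiffQuot f' x t| ≤ 2 * M := by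
  have h := abs_sub_le_of_abs_deriv_le hf' hM (x - t) (x + t)
  rw [show x - t - (x + t) = -(2 * t) by ring, abs_neg, abs_mul, abs_two] at h
  rw [symmDiffQuot, abs_div]
  exact div_le_of_le_mul₀ (abs_nonneg t) (by linarith [abs_nonneg (f'' 0), hM 0]) (by linarith)

theorem abs_symmDiffQuot_le_of_abs_le {M : ℝ} (hM : ∀ y, |f' y| ≤ M) {t : ℝ} (ht : 0 < t) :
    |symmDiffQuot f' x t| ≤ 2 * M * t⁻¹ := by
  rw [symmDiffQuot, abs_div, abs_of_pos ht, div_eq_mul_inv]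
  refine mul_le_mul_of_nonneg_right ?_ (inv_nonneg.2 ht.le)
  linarith [abs_sub (f' (x - t)) (f' (x + t)), hM (x - t), hM (x + t)]

theorem intervalIntegrable_symmDiffQuot {M : ℝ} (hf' : ∀ y, HasDerivAt f' (f'' y) y)
    (hM : ∀ y, |f'' y| ≤ M) (a b : ℝ) : IntervalIntegrable (symmDiffQuot f' x) volume a b := by
  have hcont : Continuous f' := continuous_iff_continuousAt.2 fun y => (hf' y).continuousAt
  have hmeas : Measurable (symmDiffQuot f' x) := by unfold symmDiffQuot; fun_prop
  refine IntegrableOn.intervalIntegrable <|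
    Measure.integrableOn_of_bounded isCompact_uIcc.measure_lt_top.ne hmeas.aestronglyMeasurable
      (M := 2 * M) (ae_of_all _ fun t => ?_)
  simpa only [Real.norm_eq_abs] using abs_symmDiffQuot_le_of_abs_deriv_le hf' hM t

theorem abs_integral_symmDiffQuot_le {M₁ M₂ R : ℝ} (hf' : ∀ y, HasDerivAt f' (f'' y) y)
    (hM₁ : ∀ y, |f' y| ≤ M₁) (hM₂ : ∀ y, |f'' y| ≤ M₂) (hR : 1 ≤ R) :
    |∫ t in (0 : ℝ)..R, symmDiffQuot f' x t| ≤ 2 * M₂ + 2 * M₁ * Real.log R := by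
  have hint := intervalIntegrable_symmDiffQuot (x := x) hf' hM₂
  have hnear : |∫ t in (0 : ℝ)..1, symmDiffQuot f' x t| ≤ 2 * M₂ := by
    simpa using norm_integral_le_of_norm_le_const (a := 0) (b := 1) (f := symmDiffQuot f' x)
      fun t _ => abs_symmDiffQuot_le_of_abs_deriv_le hf' hM₂ t
  have hfar : |∫ t in (1 : ℝ)..R, symmDiffQuot f' x t| ≤ 2 * M₁ * Real.log R := by
    have hinv : IntervalIntegrable (fun t : ℝ => t⁻¹) volume 1 R :=
      intervalIntegrable_inv (fun t ht => (one_pos.trans_le (uIcc_of_le hR ▸ ht).1).ne')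
        continuousOn_id
    calc |∫ t in (1 : ℝ)..R, symmDiffQuot f' x t| ≤ ∫ t in (1 : ℝ)..R, 2 * M₁ * t⁻¹ :=
          intervalIntegral.norm_integral_le_of_norm_le (f := symmDiffQuot f' x) hR
            (ae_of_all _ fun t ht => abs_symmDiffQuot_le_of_abs_le hM₁ (one_pos.trans ht.1))
            (hinv.const_mul _)
      _ = 2 * M₁ * Real.log R := by
          rw [intervalIntegral.integral_const_mul,
            integral_inv_of_pos one_pos (one_pos.trans_le hR), div_one]
  rw [← integral_add_adjacent_intervals (hint 0 1) (hint 1 R)]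
  exact (abs_add_le _ _).trans (add_le_add hnear hfar)

theorem hasDerivAt_symmSecondDiff (hf : ∀ y, HasDerivAt f (f' y) y) (t : ℝ) :
    HasDerivAt (symmSecondDiff f x) (f' (x + t) - f' (x - t)) t := by
  have hminus : HasDerivAt (fun s => f (x - s)) (f' (x - t) * (-1)) t :=
    (hf (x - t)).comp t ((hasDerivAt_id t).const_sub x)
  have hplus : HasDerivAt (fun s => f (x + s)) (f' (x + t) * 1) t :=
    (hf (x + t)).comp t ((hasDerivAt_id t).const_add x)
  exact ((hminus.add hplus).sub_const (2 * f x)).congr_deriv (by ring)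

theorem abs_symmSecondDiff_le {A ε R t : ℝ}
    (hHolder : ∀ y y', R ≤ |y - y'| → |f y - f y'| ≤ A * |y - y'| ^ (1 - ε)) (hR : 0 ≤ R)
    (ht : R ≤ t) : |symmSecondDiff f x t| ≤ 2 * A * t ^ (1 - ε) := by
  have hminus_dist : |x - t - x| = t := by
    rw [sub_sub_cancel_left, abs_neg, abs_of_nonneg (hR.trans ht)]
  have hplus_dist : |x + t - x| = t := by rw [add_sub_cancel_left, abs_of_nonneg (hR.trans ht)]
  have hminus := hHolder (x - t) x (by rwa [hminus_dist])
  have hplus := hHolder (x + t) x (by rwa [hplus_dist])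
  rw [hminus_dist] at hminus
  rw [hplus_dist] at hplus
  calc |symmSecondDiff f x t| = |(f (x - t) - f x) + (f (x + t) - f x)| := by
        rw [symmSecondDiff]; ring_nf
    _ ≤ 2 * A * t ^ (1 - ε) := by linarith [abs_add_le (f (x - t) - f x) (f (x + t) - f x)]

theorem integral_symmDiffQuot_eq (hf : ∀ y, HasDerivAt f (f' y) y) (hf'c : Continuous f')
    {a b : ℝ} (ha : 0 < a) (hab : a ≤ b) :
    ∫ t in a..b, symmDiffQuot f' x t =
      symmSecondDiff f x a / a - symmSecondDiff f x b / b -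
        ∫ t in a..b, symmSecondDiff f x t / t ^ 2 := by
  have hpos : ∀ t ∈ uIcc a b, t ≠ 0 := fun t ht =>
    (ha.trans_le (by rw [uIcc_of_le hab] at ht; exact ht.1)).ne'
  have H := integral_mul_deriv_eq_deriv_mul (fun t ht => hasDerivAt_inv (hpos t ht))
    (fun t _ => hasDerivAt_symmSecondDiff (x := x) hf t)
    ((continuousOn_pow 2).inv₀ (fun t ht => pow_ne_zero 2 (hpos t ht))).neg.intervalIntegrable
    ((by fun_prop : Continuous fun t => f' (x + t) - f' (x - t)).intervalIntegrable _ _)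
  have hg : ∀ t, symmDiffQuot f' x t = -(t⁻¹ * (f' (x + t) - f' (x - t))) := fun t => by
    rw [symmDiffQuot]; ring
  simp only [hg, intervalIntegral.integral_neg, H, neg_mul, div_eq_inv_mul]
  ring

theorem tendsto_integral_symmDiffQuot {M A ε R : ℝ} (hf : ∀ y, HasDerivAt f (f' y) y)
    (hf' : ∀ y, HasDerivAt f' (f'' y) y) (hM : ∀ y, |f'' y| ≤ M)
    (hHolder : ∀ y y', R ≤ |y - y'| → |f y - f y'| ≤ A * |y - y'| ^ (1 - ε))
    (hR : 0 < R) (hε : 0 < ε) :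
    Tendsto (fun T => ∫ t in (0 : ℝ)..T, symmDiffQuot f' x t) atTop
      (𝓝 ((∫ t in (0 : ℝ)..R, symmDiffQuot f' x t) +
        (symmSecondDiff f x R / R - ∫ t in Ioi R, symmSecondDiff f x t / t ^ 2))) := by
  have hint := intervalIntegrable_symmDiffQuot (x := x) hf' hM
  have hu := fun t => abs_symmSecondDiff_le (x := x) hHolder hR.le (t := t)
  have hu_meas : Measurable (symmSecondDiff f x) := continuous_iff_continuousAt.2
    (fun t => (hasDerivAt_symmSecondDiff hf t).continuousAt) |>.measurable
  have htail := ((tendsto_const_nhds (x := symmSecondDiff f x R / R)).sub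
      (tendsto_div_atTop_zero_of_abs_le_rpow hu hε)).sub <|
    intervalIntegral_tendsto_integral_Ioi R
      (integrableOn_Ioi_div_sq_of_abs_le_rpow hu hu_meas hε hR) tendsto_id
  rw [sub_zero] at htail
  refine (tendsto_const_nhds.add htail).congr' ?_
  filter_upwards [eventually_ge_atTop R] with T hT
  rw [← integral_add_adjacent_intervals (hint 0 R) (hint R T),
    integral_symmDiffQuot_eq hf
      (continuous_iff_continuousAt.2 fun y => (hf' y).continuousAt) hR hT]
  rfl

end Symmetric

theorem stmt8_general (f f' f'' : ℝ → ℝ) (M1 M2 A R ε : ℝ)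
    (hder : ∀ x, HasDerivAt f (f' x) x) (hder2 : ∀ x, HasDerivAt f' (f'' x) x)
    (hM1 : ∀ x, |f' x| ≤ M1) (hM2 : ∀ x, |f'' x| ≤ M2)
    (hR : 1 < R) (hε : 0 < ε)
    (hHolder : ∀ x x' : ℝ, R ≤ |x - x'| → |f x - f x'| ≤ A * |x - x'| ^ (1 - ε)) :
    ∀ x : ℝ, ∃ Hx : ℝ,
      Filter.Tendsto (fun T : ℝ => ∫ t in (0 : ℝ)..T, (f' (x - t) - f' (x + t)) / t)
        Filter.atTop (nhds Hx) ∧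
      |Hx| ≤ 2 * M2 + 2 * Real.log R * M1 + (2 * A / R ^ ε) * (1 + 1 / ε) := by
  intro x
  have hR₀ : 0 < R := one_pos.trans hR
  refine ⟨_, tendsto_integral_symmDiffQuot hder hder2 hM2 hHolder hR₀ hε, ?_⟩
  have hu := fun t => abs_symmSecondDiff_le (x := x) hHolder hR₀.le (t := t)
  have hboundary := abs_div_le_of_abs_le_rpow hR₀ (hu R le_rfl)
  have hRε : R ^ ε ≠ 0 := (Real.rpow_pos_of_pos hR₀ ε).ne'
  calc _ ≤ |∫ t in (0 : ℝ)..R, symmDiffQuot f' x t| + (|symmSecondDiff f x R / R| +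
        |∫ t in Ioi R, symmSecondDiff f x t / t ^ 2|) :=
        (abs_add_le _ _).trans (add_le_add_right (abs_sub _ _) _)
    _ ≤ (2 * M2 + 2 * M1 * Real.log R) + (2 * A * R ^ (-ε) + 2 * A / (ε * R ^ ε)) := by
        gcongr
        · exact abs_integral_symmDiffQuot_le hder2 hM1 hM2 hR.le
        · exact abs_integral_Ioi_div_sq_le_of_abs_le_rpow hu hε hR₀
    _ = _ := by rw [Real.rpow_neg hR₀.le]; field_simp

theorem stmt8 (f f' f'' : ℝ → ℝ) (M1 M2 A R ε : ℝ)
    (hder : ∀ x, HasDerivAt f (f' x) x) (hder2 : ∀ x, HasDerivAt f' (f'' x) x)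
    (hM1 : ∀ x, |f' x| ≤ M1) (hM2 : ∀ x, |f'' x| ≤ M2)
    (hA : 0 < A) (hR : 1 < R) (hε : 0 < ε) (hε1 : ε < 1)
    (hHolder : ∀ x x' : ℝ, R ≤ |x - x'| → |f x - f x'| ≤ A * |x - x'| ^ (1 - ε)) :
    ∀ x : ℝ, ∃ Hx : ℝ,
      Filter.Tendsto (fun T : ℝ => ∫ t in (0 : ℝ)..T, (f' (x - t) - f' (x + t)) / t)
        Filter.atTop (nhds Hx) ∧
      |Hx| ≤ 2 * M2 + 2 * Real.log R * M1 + (2 * A / R ^ ε) * (1 + 1 / ε) :=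
  stmt8_general f f' f'' M1 M2 A R ε hder hder2 hM1 hM2 hR hε hHolder
end

section
/- Let γ : ℝ → ℝ be a mountain chain and f analytic on the strip |Im z| < ε for some ε > 0. Then for every p > 1, ∫_ℝ |f(t)|^p γ(t) dt ≤ C · sup_{|y|<ε} ∫_ℝ |f(t+iy)|^p dt, where C depends only on γ, p, ε. -/
/-!
For `p ≥ 1` the mean value property on circles and Jensen's inequality bound `|f(t)|^p` by its
mean over the disc of radius `r = min(ε, c₁/2)` about `t`, which lies in the strip. The weight
`γ` is dominated by `1` plus the sum of the Poisson bumps; an interval of length `2r ≤ c₁` meets at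
most two bases (each base it meets contains one of its endpoints), and each bump has mass at most
`π`, so the majorant has mass at most `2r + 2π` on every such interval. Integrating the disc
bound against the majorant and exchanging the integrals, every point of the strip `|Im z| < r`
is counted with weight at most `2r + 2π`.
-/

/-- A mountain chain: a piecewise continuous function consisting of Poisson-shaped
mountains `η/((x-ξ)²+η²)` (with `η ≤ 1`) over disjoint ordered bases `[a i, b i)` of
length comparable to 1, whose summits are horizontally bounded away from the base
endpoints, and plateaux of constant level 1 elsewhere. -/
structure MountainChain where
  toFun : ℝ → ℝ
  S : Set ℤ
  a : ℤ → ℝ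
  b : ℤ → ℝ
  ξ : ℤ → ℝ
  η : ℤ → ℝ
  c1 : ℝ
  c2 : ℝ
  d : ℝ
  hc1 : 0 < c1
  hd : 0 < d
  hbase : ∀ i ∈ S, c1 ≤ b i - a i ∧ b i - a i ≤ c2
  hsummit : ∀ i ∈ S, d ≤ ξ i - a i ∧ d ≤ b i - ξ i
  hη : ∀ i ∈ S, 0 < η i ∧ η i ≤ 1
  hord : ∀ i ∈ S, ∀ j ∈ S, i < j → b i ≤ a j
  hmount : ∀ i ∈ S, ∀ x ∈ Set.Ico (a i) (b i),
    toFun x = η i / ((x - ξ i) ^ 2 + (η i) ^ 2)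
  hplateau : ∀ x : ℝ, x ∉ (⋃ i ∈ S, Set.Ico (a i) (b i)) → toFun x = 1

open MeasureTheory Metric Set Real
open scoped ENNReal

section SubmeanValue

variable {E : Type*} [NormedAddCommGroup E]

theorem norm_circleAverage_le_circleAverage_norm [NormedSpace ℝ E] (f : ℂ → E) (c : ℂ) (R : ℝ) :
    ‖circleAverage f c R‖ ≤ circleAverage (fun z ↦ ‖f z‖) c R := by
  rw [circleAverage_def, circleAverage_def, norm_smul, norm_inv,
    Real.norm_of_nonneg (by positivity), smul_eq_mul]
  gcongr
  exact intervalIntegral.norm_integral_le_integral_norm (by positivity)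

theorem rpow_circleAverage_le_circleAverage_rpow {g : ℂ → ℝ} {c : ℂ} {R p : ℝ}
    (hg : ContinuousOn g (sphere c |R|)) (hg₀ : ∀ z ∈ sphere c |R|, 0 ≤ g z) (hp : 1 ≤ p) :
    circleAverage g c R ^ p ≤ circleAverage (fun z ↦ g z ^ p) c R := by
  have hcont : Continuous fun θ ↦ g (circleMap c R θ) :=
    hg.comp_continuous (continuous_circleMap c R) (circleMap_mem_sphere' c R)
  have hcont_p : Continuous fun θ ↦ g (circleMap c R θ) ^ p :=
    hcont.rpow_const fun _ ↦ Or.inr (by linarith)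
  rw [circleAverage_eq_intervalAverage, circleAverage_eq_intervalAverage,
    uIoc_of_le (by positivity)]
  refine (convexOn_rpow hp).map_set_average_le (continuousOn_id.rpow_const fun _ _ ↦ Or.inr
    (by linarith)) isClosed_Ici (by simp [pi_pos]) (by simp [ENNReal.mul_eq_top])
    (ae_of_all _ fun θ ↦ hg₀ _ (circleMap_mem_sphere' c R θ))
    hcont.integrableOn_Ioc hcont_p.integrableOn_Ioc

theorem DiffContOnCl.norm_rpow_le_circleAverage [NormedSpace ℂ E] [CompleteSpace E]
    {f : ℂ → E} {c : ℂ} {R p : ℝ} (hf : DiffContOnCl ℂ f (ball c |R|)) (hp : 1 ≤ p) :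
    ‖f c‖ ^ p ≤ Real.circleAverage (fun z ↦ ‖f z‖ ^ p) c R := by
  rcases eq_or_ne R 0 with rfl | hR
  · simp
  have hsphere : ContinuousOn (fun z ↦ ‖f z‖) (sphere c |R|) := by
    refine hf.continuousOn.norm.mono ?_
    rw [closure_ball c (abs_ne_zero.2 hR)]
    exact sphere_subset_closedBall
  calc ‖f c‖ ^ p ≤ Real.circleAverage (fun z ↦ ‖f z‖) c R ^ p := by
        gcongr
        rw [← hf.circleAverage]
        exact norm_circleAverage_le_circleAverage_norm f c R
    _ ≤ _ := rpow_circleAverage_le_circleAverage_rpow hsphere (fun _ _ ↦ norm_nonneg _) hp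

theorem ofReal_two_pi_mul_ofReal_circleAverage {g : ℂ → ℝ} {c : ℂ} {R : ℝ}
    (hg : ContinuousOn g (sphere c |R|)) (hg₀ : ∀ z ∈ sphere c |R|, 0 ≤ g z) :
    ENNReal.ofReal (2 * π) * ENNReal.ofReal (circleAverage g c R) =
      ∫⁻ θ in Ioo (-π) π, ENNReal.ofReal (g (circleMap c R θ)) := by
  have hcont : Continuous fun θ ↦ g (circleMap c R θ) :=
    hg.comp_continuous (continuous_circleMap c R) (circleMap_mem_sphere' c R)
  have hperiod : ∫ θ in 0..2 * π, g (circleMap c R θ) = ∫ θ in -π..π, g (circleMap c R θ) := by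
    have := (periodic_circleMap c R).comp g |>.intervalIntegral_add_eq 0 (-π)
    simp only [Function.comp_def] at this
    rwa [zero_add, show -π + 2 * π = π by ring] at this
  rw [← ENNReal.ofReal_mul (by positivity), circleAverage_def, smul_eq_mul, ← mul_assoc,
    mul_inv_cancel₀ (by positivity), one_mul, hperiod,
    intervalIntegral.integral_of_le (by linarith [pi_pos]),
    ofReal_integral_eq_lintegral_ofReal hcont.integrableOn_Ioc
      (ae_of_all _ fun θ ↦ hg₀ _ (circleMap_mem_sphere' c R θ)),
    Measure.restrict_congr_set Ioo_ae_eq_Ioc]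

theorem setLIntegral_Ioo_zero_ofReal {r : ℝ} (hr : 0 ≤ r) :
    ∫⁻ ρ in Ioo 0 r, ENNReal.ofReal ρ = ENNReal.ofReal (r ^ 2 / 2) := by
  have hint : IntegrableOn (fun ρ : ℝ ↦ ρ) (Ioo 0 r) :=
    continuous_id.integrableOn_Icc.mono_set Ioo_subset_Icc_self
  rw [← ofReal_integral_eq_lintegral_ofReal hint
      (ae_restrict_of_forall_mem measurableSet_Ioo fun ρ hρ ↦ hρ.1.le),
    ← integral_Ioc_eq_integral_Ioo, ← intervalIntegral.integral_of_le hr, integral_id]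
  norm_num

theorem circleMap_eq_add_polarCoord_symm (c : ℂ) (ρ θ : ℝ) :
    circleMap c ρ θ = c + Complex.polarCoord.symm (ρ, θ) := by
  simp [circleMap, Complex.exp_mul_I, ← Complex.ofReal_cos, ← Complex.ofReal_sin]

theorem DiffContOnCl.ofReal_two_pi_mul_le_setLIntegral_circleMap [NormedSpace ℂ E]
    [CompleteSpace E] {f : ℂ → E} {c : ℂ} {R p : ℝ} (hf : DiffContOnCl ℂ f (ball c |R|))
    (hR : R ≠ 0) (hp : 1 ≤ p) :
    ENNReal.ofReal (2 * π) * ENNReal.ofReal (‖f c‖ ^ p) ≤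
      ∫⁻ θ in Ioo (-π) π, ENNReal.ofReal (‖f (circleMap c R θ)‖ ^ p) := by
  have hcont : ContinuousOn (fun z ↦ ‖f z‖ ^ p) (sphere c |R|) :=
    (hf.continuousOn.norm.rpow_const fun _ _ ↦ Or.inr (by linarith)).mono
      (by rw [closure_ball c (abs_ne_zero.2 hR)]; exact sphere_subset_closedBall)
  rw [← ofReal_two_pi_mul_ofReal_circleAverage hcont fun _ _ ↦ by positivity]
  gcongr
  exact hf.norm_rpow_le_circleAverage hp

theorem setLIntegral_ball_eq_setLIntegral_polarCoord (h : ℂ → ℝ≥0∞) (c : ℂ) (r : ℝ) :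
    ∫⁻ z in ball c r, h z =
      ∫⁻ q in Ioo 0 r ×ˢ Ioo (-π) π, ENNReal.ofReal q.1 * h (c + Complex.polarCoord.symm q) := by
  set P : Set (ℝ × ℝ) := Ioo 0 r ×ˢ Ioo (-π) π
  have hPt : P ⊆ polarCoord.target := prod_mono Ioo_subset_Ioi_self subset_rfl
  have hmem : ∀ q ∈ polarCoord.target, c + Complex.polarCoord.symm q ∈ ball c r ↔ q ∈ P :=
    fun q hq ↦ by simp [P, dist_eq_norm, abs_of_pos (mem_Ioi.1 hq.1), mem_Ioi.1 hq.1, hq.2]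
  rw [← lintegral_indicator measurableSet_ball, ← lintegral_add_left_eq_self _ c,
    ← Complex.lintegral_comp_polarCoord_symm,
    ← inter_eq_left.2 hPt, ← setLIntegral_indicator (measurableSet_Ioo.prod measurableSet_Ioo)]
  refine setLIntegral_congr_fun polarCoord.open_target.measurableSet fun q hq ↦ ?_
  by_cases hqP : q ∈ P
  · rw [indicator_of_mem ((hmem q hq).2 hqP), indicator_of_mem hqP, smul_eq_mul]
  · rw [indicator_of_notMem (mt (hmem q hq).1 hqP), indicator_of_notMem hqP, smul_zero]

theorem DifferentiableOn.ofReal_norm_rpow_le_inv_mul_setLIntegral_ball [NormedSpace ℂ E]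
    [CompleteSpace E] {f : ℂ → E} {c : ℂ} {r p : ℝ} (hf : DifferentiableOn ℂ f (ball c r))
    (hr : 0 < r) (hp : 1 ≤ p) :
    ENNReal.ofReal (‖f c‖ ^ p) ≤
      (ENNReal.ofReal (π * r ^ 2))⁻¹ * ∫⁻ z in ball c r, ENNReal.ofReal (‖f z‖ ^ p) := by
  rw [← ENNReal.div_eq_inv_mul, ENNReal.le_div_iff_mul_le (Or.inl (by simp; positivity))
    (Or.inl ENNReal.ofReal_ne_top), mul_comm]
  set g : ℂ → ℝ≥0∞ := fun z ↦ ENNReal.ofReal (‖f z‖ ^ p)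
  set A := ENNReal.ofReal (‖f c‖ ^ p)
  set P : Set (ℝ × ℝ) := Ioo 0 r ×ˢ Ioo (-π) π
  have hP : ∀ q ∈ P, c + Complex.polarCoord.symm q ∈ ball c r := fun q hq ↦ by
    simpa [dist_eq_norm, abs_of_pos hq.1.1] using hq.1.2
  have hmeas : AEMeasurable (fun q : ℝ × ℝ ↦ ENNReal.ofReal q.1 * g (c + Complex.polarCoord.symm q))
      (volume.restrict P) := by
    have hpolar : Continuous fun q : ℝ × ℝ ↦ c + Complex.polarCoord.symm q := by
      simp only [Complex.polarCoord_symm_apply]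
      fun_prop
    refine measurable_fst.ennreal_ofReal.aemeasurable.mul (ContinuousOn.aemeasurable ?_
      (measurableSet_Ioo.prod measurableSet_Ioo))
    exact ENNReal.continuous_ofReal.comp_continuousOn <|
      ((hf.continuousOn.comp hpolar.continuousOn hP).norm.rpow_const fun _ _ ↦ Or.inr (by linarith))
  calc ENNReal.ofReal (π * r ^ 2) * A
      = ∫⁻ ρ in Ioo 0 r, ENNReal.ofReal ρ * (ENNReal.ofReal (2 * π) * A) := by
        rw [lintegral_mul_const' _ _ (by finiteness), setLIntegral_Ioo_zero_ofReal hr.le,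
          ← mul_assoc]
        congr 1
        rw [← ENNReal.ofReal_mul (by positivity)]
        ring_nf
    _ ≤ ∫⁻ ρ in Ioo 0 r, ∫⁻ θ in Ioo (-π) π,
          ENNReal.ofReal ρ * g (c + Complex.polarCoord.symm (ρ, θ)) := by
        refine setLIntegral_mono' measurableSet_Ioo fun ρ hρ ↦ ?_
        rw [lintegral_const_mul' _ _ ENNReal.ofReal_ne_top]
        simp_rw [g, ← circleMap_eq_add_polarCoord_symm]
        gcongr
        refine DiffContOnCl.ofReal_two_pi_mul_le_setLIntegral_circleMap ?_ hρ.1.ne' hp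
        exact hf.diffContOnCl_ball (closedBall_subset_ball (by rw [abs_of_pos hρ.1]; exact hρ.2))
    _ = ∫⁻ z in ball c r, g z := by
        rw [setLIntegral_ball_eq_setLIntegral_polarCoord, Measure.volume_eq_prod,
          setLIntegral_prod _ (by rwa [← Measure.volume_eq_prod])]

end SubmeanValue

theorem lintegral_ofReal_poissonKernel {ξ η : ℝ} (hη : 0 < η) :
    ∫⁻ t, ENNReal.ofReal (η / ((t - ξ) ^ 2 + η ^ 2)) = ENNReal.ofReal π := by
  have hcauchy : ∀ t, η / ((t - ξ) ^ 2 + η ^ 2) =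
      π * ProbabilityTheory.cauchyPDFReal ξ η.toNNReal t := fun t ↦ by
    rw [ProbabilityTheory.cauchyPDFReal_def, Real.coe_toNNReal _ hη.le]
    field_simp
  simp_rw [hcauchy, ENNReal.ofReal_mul pi_pos.le]
  have hone : ∫⁻ t, ENNReal.ofReal (ProbabilityTheory.cauchyPDFReal ξ η.toNNReal t) = 1 :=
    ProbabilityTheory.lintegral_cauchyPDF_eq_one ξ (by simpa using hη)
  rw [lintegral_const_mul' _ _ ENNReal.ofReal_ne_top, hone, mul_one]

theorem ENNReal.tsum_indicator_const_le_of_subsingleton {α : Type*} {T : Set α}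
    (hT : T.Subsingleton) (c : ℝ≥0∞) : ∑' i, T.indicator (fun _ ↦ c) i ≤ c := by
  rw [← tsum_subtype, ENNReal.tsum_set_const]
  exact mul_le_of_le_one_left' (mod_cast Set.encard_le_one_iff_subsingleton.2 hT)

noncomputable section

namespace MountainChain

variable (Γ : MountainChain)

def base (i : ℤ) : Set ℝ := Ico (Γ.a i) (Γ.b i)

def bump (i : ℤ) : ℝ → ℝ≥0∞ :=
  (Γ.base i).indicator fun x ↦ ENNReal.ofReal (Γ.η i / ((x - Γ.ξ i) ^ 2 + Γ.η i ^ 2))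

/-- `toFun` is not assumed measurable, so we integrate against this measurable majorant. -/
def majorant (t : ℝ) : ℝ≥0∞ := 1 + ∑' i : Γ.S, Γ.bump i t

theorem measurableSet_base (i : ℤ) : MeasurableSet (Γ.base i) := measurableSet_Ico

theorem measurable_bump (i : ℤ) : Measurable (Γ.bump i) :=
  (Measurable.ennreal_ofReal (by fun_prop)).indicator (Γ.measurableSet_base i)

theorem measurable_majorant : Measurable Γ.majorant :=
  measurable_const.add (Measurable.tsum fun i : Γ.S ↦ Γ.measurable_bump i)

theorem ofReal_toFun_le_majorant (t : ℝ) : ENNReal.ofReal (Γ.toFun t) ≤ Γ.majorant t := by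
  by_cases ht : t ∈ ⋃ i ∈ Γ.S, Γ.base i
  · obtain ⟨i, hi, hti⟩ := mem_iUnion₂.1 ht
    calc ENNReal.ofReal (Γ.toFun t) = Γ.bump i t := by
          rw [Γ.hmount i hi t hti, bump, indicator_of_mem hti]
      _ ≤ ∑' j : Γ.S, Γ.bump j t := ENNReal.le_tsum (⟨i, hi⟩ : Γ.S)
      _ ≤ Γ.majorant t := le_add_self
  · rw [Γ.hplateau t ht, ENNReal.ofReal_one]
    exact le_self_add

theorem lintegral_bump_le {i : ℤ} (hi : i ∈ Γ.S) : ∫⁻ t, Γ.bump i t ≤ ENNReal.ofReal π :=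
  (lintegral_mono (indicator_le_self _ _)).trans_eq
    (lintegral_ofReal_poissonKernel (Γ.hη i hi).1)

def baseAt (x : ℝ) : Set Γ.S := {i | x ∈ Γ.base i}

theorem subsingleton_baseAt (x : ℝ) : (Γ.baseAt x).Subsingleton := by
  intro i (hi : x ∈ Γ.base i) j (hj : x ∈ Γ.base j)
  by_contra hne
  rcases lt_or_gt_of_ne (Subtype.coe_ne_coe.2 hne) with h | h
  · linarith [Γ.hord i i.2 j j.2 h, hi.2, hj.1]
  · linarith [Γ.hord j j.2 i i.2 h, hj.2, hi.1]

theorem endpoint_mem_base_of_inter_Ioo {i : ℤ} (hi : i ∈ Γ.S) {s r : ℝ} (h2r : 2 * r ≤ Γ.c1)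
    (hne : (Γ.base i ∩ Ioo (s - r) (s + r)).Nonempty) :
    s - r ∈ Γ.base i ∨ s + r ∈ Γ.base i := by
  obtain ⟨x, ⟨hxa, hxb⟩, hxs, hxs'⟩ := hne
  have hlen := (Γ.hbase i hi).1
  by_cases h : Γ.a i ≤ s - r
  · exact Or.inl ⟨h, by linarith⟩
  · exact Or.inr ⟨by linarith, by linarith⟩

theorem setLIntegral_bump_Ioo_le (i : Γ.S) {r : ℝ} (h2r : 2 * r ≤ Γ.c1) (s : ℝ) :
    ∫⁻ t in Ioo (s - r) (s + r), Γ.bump i t ≤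
      (Γ.baseAt (s - r)).indicator (fun _ ↦ ENNReal.ofReal π) i +
        (Γ.baseAt (s + r)).indicator (fun _ ↦ ENNReal.ofReal π) i := by
  rcases (Γ.base i ∩ Ioo (s - r) (s + r)).eq_empty_or_nonempty with h | h
  · rw [bump, setLIntegral_indicator (Γ.measurableSet_base i), h, Measure.restrict_empty,
      lintegral_zero_measure]
    exact bot_le
  · refine (setLIntegral_le_lintegral _ _).trans ((Γ.lintegral_bump_le i.2).trans ?_)
    rcases Γ.endpoint_mem_base_of_inter_Ioo i.2 h2r h with h' | h'
    · rw [indicator_of_mem (s := Γ.baseAt (s - r)) h']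
      exact le_self_add
    · rw [indicator_of_mem (s := Γ.baseAt (s + r)) h']
      exact le_add_self

theorem setLIntegral_majorant_Ioo_le {r : ℝ} (h2r : 2 * r ≤ Γ.c1) (s : ℝ) :
    ∫⁻ t in Ioo (s - r) (s + r), Γ.majorant t ≤
      ENNReal.ofReal (2 * r) + 2 * ENNReal.ofReal π := by
  calc ∫⁻ t in Ioo (s - r) (s + r), Γ.majorant t
      = (∫⁻ t in Ioo (s - r) (s + r), 1) + ∑' i : Γ.S, ∫⁻ t in Ioo (s - r) (s + r), Γ.bump i t := by
        simp only [majorant]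
        rw [lintegral_add_left measurable_const,
          lintegral_tsum fun i : Γ.S ↦ (Γ.measurable_bump i).aemeasurable]
    _ ≤ ENNReal.ofReal (2 * r) + (ENNReal.ofReal π + ENNReal.ofReal π) := by
        rw [setLIntegral_one, Real.volume_Ioo, show s + r - (s - r) = 2 * r by ring]
        gcongr
        refine (ENNReal.tsum_le_tsum fun i ↦ Γ.setLIntegral_bump_Ioo_le i h2r s).trans ?_
        rw [ENNReal.tsum_add]
        exact add_le_add
          (ENNReal.tsum_indicator_const_le_of_subsingleton (Γ.subsingleton_baseAt _) _)
          (ENNReal.tsum_indicator_const_le_of_subsingleton (Γ.subsingleton_baseAt _) _)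
    _ = _ := by ring

end MountainChain

end

theorem ContinuousOn.measurable_indicator {α β : Type*} [TopologicalSpace α] [MeasurableSpace α]
    [OpensMeasurableSpace α] [TopologicalSpace β] [MeasurableSpace β] [BorelSpace β] [Zero β]
    {f : α → β} {s : Set α} (hf : ContinuousOn f s) (hs : MeasurableSet s) :
    Measurable (s.indicator f) := by
  classical
  simpa only [piecewise_eq_indicator] using hf.measurable_piecewise (g := 0) continuousOn_const hs

theorem abs_im_lt_and_abs_re_sub_lt_of_mem_ball {z : ℂ} {t r : ℝ} (hz : z ∈ ball (t : ℂ) r) :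
    |z.im| < r ∧ |z.re - t| < r := by
  rw [mem_ball, dist_eq_norm] at hz
  have him := (Complex.abs_im_le_norm (z - t)).trans_lt hz
  have hre := (Complex.abs_re_le_norm (z - t)).trans_lt hz
  simp only [Complex.sub_re, Complex.sub_im, Complex.ofReal_re, Complex.ofReal_im,
    sub_zero] at hre him
  exact ⟨him, hre⟩

theorem lintegral_indicator_ball_mul_le (g : ℂ → ℝ≥0∞) {w : ℝ → ℝ≥0∞} (hw : Measurable w)
    {r : ℝ} {M : ℝ≥0∞} (hM : ∀ s, ∫⁻ t in Ioo (s - r) (s + r), w t ≤ M) (z : ℂ) :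
    ∫⁻ t : ℝ, (ball (t : ℂ) r).indicator g z * w t ≤ {z : ℂ | |z.im| < r}.indicator g z * M := by
  calc ∫⁻ t : ℝ, (ball (t : ℂ) r).indicator g z * w t
      ≤ ∫⁻ t : ℝ, {z : ℂ | |z.im| < r}.indicator g z *
          (Ioo (z.re - r) (z.re + r)).indicator w t := by
        refine lintegral_mono fun t ↦ ?_
        by_cases hz : z ∈ ball (t : ℂ) r
        · obtain ⟨him, hre⟩ := abs_im_lt_and_abs_re_sub_lt_of_mem_ball hz
          have ht : t ∈ Ioo (z.re - r) (z.re + r) := by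
            constructor <;> linarith [abs_lt.1 hre]
          rw [indicator_of_mem hz, indicator_of_mem (show z ∈ {z : ℂ | |z.im| < r} from him),
            indicator_of_mem ht]
        · rw [indicator_of_notMem hz, zero_mul]
          exact bot_le
    _ ≤ {z : ℂ | |z.im| < r}.indicator g z * M := by
        rw [lintegral_const_mul _ (hw.indicator measurableSet_Ioo),
          lintegral_indicator measurableSet_Ioo]
        gcongr
        exact hM z.re

theorem lintegral_setLIntegral_ball_mul_le {g : ℂ → ℝ≥0∞} (hg : Measurable g) {w : ℝ → ℝ≥0∞}
    (hw : Measurable w) {r : ℝ} {M : ℝ≥0∞}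
    (hM : ∀ s, ∫⁻ t in Ioo (s - r) (s + r), w t ≤ M) :
    ∫⁻ t : ℝ, (∫⁻ z in ball (t : ℂ) r, g z) * w t ≤
      M * ∫⁻ z in {z : ℂ | |z.im| < r}, g z := by
  have hstrip : MeasurableSet {z : ℂ | |z.im| < r} :=
    measurableSet_lt (by fun_prop) measurable_const
  have hmeas : Measurable fun p : ℝ × ℂ ↦ (ball (p.1 : ℂ) r).indicator g p.2 * w p.1 := by
    refine Measurable.mul ?_ (hw.comp measurable_fst)
    refine Measurable.ite ?_ (hg.comp measurable_snd) measurable_const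
    exact measurableSet_lt (f := fun p : ℝ × ℂ ↦ dist p.2 (p.1 : ℂ)) (by fun_prop)
      measurable_const
  calc ∫⁻ t : ℝ, (∫⁻ z in ball (t : ℂ) r, g z) * w t
      = ∫⁻ t : ℝ, ∫⁻ z, (ball (t : ℂ) r).indicator g z * w t := by
        refine lintegral_congr fun t ↦ ?_
        rw [← lintegral_indicator measurableSet_ball,
          lintegral_mul_const _ (hg.indicator measurableSet_ball)]
    _ = ∫⁻ z, ∫⁻ t : ℝ, (ball (t : ℂ) r).indicator g z * w t :=
        lintegral_lintegral_swap hmeas.aemeasurable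
    _ ≤ ∫⁻ z, {z : ℂ | |z.im| < r}.indicator g z * M :=
        lintegral_mono (lintegral_indicator_ball_mul_le g hw hM)
    _ = M * ∫⁻ z in {z : ℂ | |z.im| < r}, g z := by
        rw [lintegral_mul_const _ (hg.indicator hstrip), lintegral_indicator hstrip, mul_comm]

theorem setLIntegral_abs_im_lt_le {g : ℂ → ℝ≥0∞} (hg : Measurable g) {r : ℝ} {B : ℝ≥0∞}
    (hB : ∀ y ∈ Ioo (-r) r, ∫⁻ x : ℝ, g (x + y * Complex.I) ≤ B) :
    ∫⁻ z in {z : ℂ | |z.im| < r}, g z ≤ ENNReal.ofReal (2 * r) * B := by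
  set strip := {z : ℂ | |z.im| < r}
  have hstrip : MeasurableSet strip := measurableSet_lt (by fun_prop) measurable_const
  have hcoord : ∀ q : ℝ × ℝ, Complex.measurableEquivRealProd.symm q = q.1 + q.2 * Complex.I :=
    fun q ↦ by simp [Complex.measurableEquivRealProd_symm_apply, Complex.ext_iff]
  calc ∫⁻ z in strip, g z
      = ∫⁻ y : ℝ, ∫⁻ x : ℝ, strip.indicator g (x + y * Complex.I) := by
        rw [← lintegral_indicator hstrip, ← (Complex.volume_preserving_equiv_real_prod.symm
          ).lintegral_comp_emb Complex.measurableEquivRealProd.symm.measurableEmbedding,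
          Measure.volume_eq_prod, lintegral_prod_symm]
        · simp only [hcoord]
        · exact ((hg.indicator hstrip).comp
            Complex.measurableEquivRealProd.symm.measurable).aemeasurable
    _ ≤ ∫⁻ y : ℝ, (Ioo (-r) r).indicator (fun _ ↦ B) y := by
        refine lintegral_mono fun y ↦ ?_
        by_cases hy : y ∈ Ioo (-r) r
        · have hmem : ∀ x : ℝ, (x : ℂ) + y * Complex.I ∈ strip := fun x ↦ by
            simpa [strip, abs_lt] using hy
          simp only [indicator_of_mem hy, indicator_of_mem (hmem _)]
          exact hB y hy
        · have hmem : ∀ x : ℝ, (x : ℂ) + y * Complex.I ∉ strip := fun x ↦ by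
            simpa [strip, abs_lt] using hy
          simp [indicator_of_notMem hy, indicator_of_notMem (hmem _)]
    _ = ENNReal.ofReal (2 * r) * B := by
        rw [lintegral_indicator_const measurableSet_Ioo, Real.volume_Ioo, mul_comm]
        ring_nf

theorem lintegral_norm_rpow_mul_le_of_setLIntegral_Ioo_le {E : Type*} [NormedAddCommGroup E]
    [NormedSpace ℂ E] [CompleteSpace E] {f : ℂ → E} {ε r p : ℝ}
    (hf : DifferentiableOn ℂ f {z : ℂ | |z.im| < ε}) (hr : 0 < r) (hrε : r ≤ ε) (hp : 1 ≤ p)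
    {w : ℝ → ℝ≥0∞} (hw : Measurable w) {M : ℝ≥0∞}
    (hM : ∀ s, ∫⁻ t in Ioo (s - r) (s + r), w t ≤ M) :
    ∫⁻ t : ℝ, ENNReal.ofReal (‖f t‖ ^ p) * w t ≤
      (ENNReal.ofReal (π * r ^ 2))⁻¹ * (M * (ENNReal.ofReal (2 * r) *
        ⨆ y : {y : ℝ // |y| < ε}, ∫⁻ t : ℝ, ENNReal.ofReal (‖f (t + y * Complex.I)‖ ^ p))) := by
  set strip := {z : ℂ | |z.im| < ε}
  have hstrip : IsOpen strip := isOpen_lt (by fun_prop) continuous_const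
  set g := strip.indicator fun z ↦ ENNReal.ofReal (‖f z‖ ^ p)
  have hg : Measurable g := ContinuousOn.measurable_indicator
    (ENNReal.continuous_ofReal.comp_continuousOn
      (hf.continuousOn.norm.rpow_const fun _ _ ↦ Or.inr (by linarith))) hstrip.measurableSet
  have hc₀ : ENNReal.ofReal (π * r ^ 2) ≠ 0 := by simp; positivity
  have hdisc : ∀ t : ℝ, ENNReal.ofReal (‖f t‖ ^ p) ≤
      (ENNReal.ofReal (π * r ^ 2))⁻¹ * ∫⁻ z in ball (t : ℂ) r, g z := fun t ↦ by
    have hball : ball (t : ℂ) r ⊆ strip := fun z hz ↦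
      (abs_im_lt_and_abs_re_sub_lt_of_mem_ball hz).1.trans_le hrε
    rw [setLIntegral_indicator hstrip.measurableSet, inter_eq_right.2 hball]
    exact (hf.mono hball).ofReal_norm_rpow_le_inv_mul_setLIntegral_ball hr hp
  calc ∫⁻ t : ℝ, ENNReal.ofReal (‖f t‖ ^ p) * w t
      ≤ ∫⁻ t : ℝ, (ENNReal.ofReal (π * r ^ 2))⁻¹ * ((∫⁻ z in ball (t : ℂ) r, g z) * w t) := by
        refine lintegral_mono fun t ↦ ?_
        rw [← mul_assoc]
        gcongr
        exact hdisc t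
    _ ≤ (ENNReal.ofReal (π * r ^ 2))⁻¹ * (M * ∫⁻ z in {z : ℂ | |z.im| < r}, g z) := by
        rw [lintegral_const_mul' _ _ (ENNReal.inv_ne_top.2 hc₀)]
        gcongr
        exact lintegral_setLIntegral_ball_mul_le hg hw hM
    _ ≤ _ := by
        gcongr
        refine setLIntegral_abs_im_lt_le hg fun y hy ↦ ?_
        have hyε : |y| < ε := (abs_lt.2 hy).trans_le hrε
        refine le_iSup_of_le (⟨y, hyε⟩ : {y : ℝ // |y| < ε}) (le_of_eq ?_)
        exact lintegral_congr fun x ↦ indicator_of_mem (by simpa [strip] using hyε) _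

theorem stmt11 (Γ : MountainChain) (ε p : ℝ) (hε : 0 < ε) (hp : 1 < p) :
    ∃ C : ENNReal, 0 < C ∧ C < ⊤ ∧
      ∀ f : ℂ → ℂ, DifferentiableOn ℂ f {z : ℂ | |z.im| < ε} →
        (∫⁻ t : ℝ, ENNReal.ofReal (‖f (t : ℂ)‖ ^ p * Γ.toFun t)) ≤
          C * ⨆ y : {y : ℝ // |y| < ε},
            ∫⁻ t : ℝ, ENNReal.ofReal (‖f ((t : ℂ) + (y : ℝ) * Complex.I)‖ ^ p) := by
  set r := min ε (Γ.c1 / 2)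
  have hr : 0 < r := lt_min hε (by linarith [Γ.hc1])
  have h2r : 2 * r ≤ Γ.c1 := by linarith [min_le_right ε (Γ.c1 / 2)]
  set M := ENNReal.ofReal (2 * r) + 2 * ENNReal.ofReal π
  refine ⟨(ENNReal.ofReal (π * r ^ 2))⁻¹ * (M * ENNReal.ofReal (2 * r)), ?_, ?_, fun f hf ↦ ?_⟩
  · exact ENNReal.mul_pos (ENNReal.inv_ne_zero.2 ENNReal.ofReal_ne_top) (by simp [M, hr])
  · refine ENNReal.mul_lt_top (ENNReal.inv_lt_top.2 ?_) (by finiteness)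
    simp only [ENNReal.ofReal_pos]
    positivity
  calc ∫⁻ t : ℝ, ENNReal.ofReal (‖f t‖ ^ p * Γ.toFun t)
      ≤ ∫⁻ t : ℝ, ENNReal.ofReal (‖f t‖ ^ p) * Γ.majorant t := by
        refine lintegral_mono fun t ↦ ?_
        rw [ENNReal.ofReal_mul (by positivity)]
        gcongr
        exact Γ.ofReal_toFun_le_majorant t
    _ ≤ _ := (lintegral_norm_rpow_mul_le_of_setLIntegral_Ioo_le hf hr (min_le_left _ _) hp.le
          Γ.measurable_majorant (Γ.setLIntegral_majorant_Ioo_le h2r)).trans_eq (by ring)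
end

section
/- Let (ξ_1, 1/η_1) and (ξ_2, 1/η_2) be the summits of two consecutive mountains of a mountain chain γ, and suppose there exist constants 0 < a ≤ A and a continuous function f with a·γ ≤ f ≤ A·γ. Then η_2/η_1 is bounded above and below by positive constants independent of the choice of consecutive summits. -/
private lemma aux_limit {f g : ℝ → ℝ} {a A t : ℝ} {s : Set ℝ}
    (hf : Continuous f) (hg : Continuous g)
    (hne : (nhdsWithin t s).NeBot)
    (hlow : ∀ x ∈ s, a * g x ≤ f x) (hup : ∀ x ∈ s, f x ≤ A * g x) :
    a * g t ≤ f t ∧ f t ≤ A * g t := by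
  have hft : Filter.Tendsto f (nhdsWithin t s) (nhds (f t)) :=
    (hf.tendsto t).mono_left nhdsWithin_le_nhds
  have h1 : Filter.Tendsto (fun x => a * g x) (nhdsWithin t s) (nhds (a * g t)) :=
    ((continuous_const.mul hg).tendsto t).mono_left nhdsWithin_le_nhds
  have h2 : Filter.Tendsto (fun x => A * g x) (nhdsWithin t s) (nhds (A * g t)) :=
    ((continuous_const.mul hg).tendsto t).mono_left nhdsWithin_le_nhds
  exact ⟨le_of_tendsto_of_tendsto h1 hft (eventually_nhdsWithin_of_forall hlow),
    le_of_tendsto_of_tendsto hft h2 (eventually_nhdsWithin_of_forall hup)⟩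

set_option maxHeartbeats 1000000 in
theorem stmt12 (Γ : MountainChain) (f : ℝ → ℝ) (a A : ℝ) (ha : 0 < a) (haA : a ≤ A)
    (hf : Continuous f)
    (hlow : ∀ x, a * Γ.toFun x ≤ f x) (hup : ∀ x, f x ≤ A * Γ.toFun x) :
    ∃ K : ℝ, 0 < K ∧
      ∀ i ∈ Γ.S, ∀ j ∈ Γ.S, i < j → (∀ k ∈ Γ.S, ¬(i < k ∧ k < j)) →
        Γ.η j / Γ.η i ≤ K ∧ Γ.η i / Γ.η j ≤ K := by
  have hA : 0 < A := lt_of_lt_of_le ha haA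
  have hd := Γ.hd
  have hc1 := Γ.hc1
  have hadpos : 0 < a * Γ.d ^ 2 := by positivity
  have hc2pos : (0:ℝ) < Γ.c2 ^ 2 + 1 := by positivity
  refine ⟨A * (Γ.c2 ^ 2 + 1) / (a * Γ.d ^ 2), by positivity, ?_⟩
  intro i hi j hj hij hcons
  -- basic facts
  have hηi := Γ.hη i hi
  have hηj := Γ.hη j hj
  have hbi := Γ.hbase i hi
  have hbj := Γ.hbase j hj
  have hsi := Γ.hsummit i hi
  have hsj := Γ.hsummit j hj
  have habi : Γ.a i < Γ.b i := by linarith [hbi.1]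
  have habj : Γ.a j < Γ.b j := by linarith [hbj.1]
  have hDi : (0:ℝ) < (Γ.b i - Γ.ξ i) ^ 2 + Γ.η i ^ 2 :=
    add_pos_of_nonneg_of_pos (sq_nonneg _) (pow_pos hηi.1 2)
  have hDj : (0:ℝ) < (Γ.a j - Γ.ξ j) ^ 2 + Γ.η j ^ 2 :=
    add_pos_of_nonneg_of_pos (sq_nonneg _) (pow_pos hηj.1 2)
  have hDile : (Γ.b i - Γ.ξ i) ^ 2 + Γ.η i ^ 2 ≤ Γ.c2 ^ 2 + 1 := by
    have h1 : Γ.b i - Γ.ξ i ≤ Γ.c2 := by linarith [hsi.1, hbi.2]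
    have h2 : (Γ.b i - Γ.ξ i) ^ 2 ≤ Γ.c2 ^ 2 :=
      pow_le_pow_left₀ (by linarith [hsi.2]) h1 2
    have h3 : Γ.η i ^ 2 ≤ 1 := by nlinarith [hηi.1, hηi.2]
    linarith
  have hDige : Γ.d ^ 2 ≤ (Γ.b i - Γ.ξ i) ^ 2 + Γ.η i ^ 2 := by
    have h2 : Γ.d ^ 2 ≤ (Γ.b i - Γ.ξ i) ^ 2 := pow_le_pow_left₀ hd.le hsi.2 2
    linarith [sq_nonneg (Γ.η i)]
  have hDjle : (Γ.a j - Γ.ξ j) ^ 2 + Γ.η j ^ 2 ≤ Γ.c2 ^ 2 + 1 := by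
    have h1 : Γ.ξ j - Γ.a j ≤ Γ.c2 := by linarith [hsj.2, hbj.2]
    have h2 : (Γ.ξ j - Γ.a j) ^ 2 ≤ Γ.c2 ^ 2 :=
      pow_le_pow_left₀ (by linarith [hsj.1]) h1 2
    have h3 : Γ.η j ^ 2 ≤ 1 := by nlinarith [hηj.1, hηj.2]
    have h4 : (Γ.a j - Γ.ξ j) ^ 2 = (Γ.ξ j - Γ.a j) ^ 2 := by ring
    linarith
  have hDjge : Γ.d ^ 2 ≤ (Γ.a j - Γ.ξ j) ^ 2 + Γ.η j ^ 2 := by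
    have h2 : Γ.d ^ 2 ≤ (Γ.ξ j - Γ.a j) ^ 2 := pow_le_pow_left₀ hd.le hsj.1 2
    have h4 : (Γ.a j - Γ.ξ j) ^ 2 = (Γ.ξ j - Γ.a j) ^ 2 := by ring
    linarith [sq_nonneg (Γ.η j)]
  -- the mountain profile of mountain i is continuous
  have hgc : Continuous (fun x => Γ.η i / ((x - Γ.ξ i) ^ 2 + Γ.η i ^ 2)) := by
    apply continuous_const.div (((continuous_id.sub continuous_const).pow 2).add continuous_const)
    intro x
    exact ne_of_gt (add_pos_of_nonneg_of_pos (sq_nonneg _) (pow_pos hηi.1 2))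
  -- limit of f at b i from the left over mountain i
  have hne : (nhdsWithin (Γ.b i) (Set.Ico (Γ.a i) (Γ.b i))).NeBot := by
    rw [← mem_closure_iff_nhdsWithin_neBot, closure_Ico (ne_of_lt habi)]
    exact Set.right_mem_Icc.mpr habi.le
  have Hi : a * (Γ.η i / ((Γ.b i - Γ.ξ i) ^ 2 + Γ.η i ^ 2)) ≤ f (Γ.b i) ∧
      f (Γ.b i) ≤ A * (Γ.η i / ((Γ.b i - Γ.ξ i) ^ 2 + Γ.η i ^ 2)) := by
    exact aux_limit hf hgc hne
      (fun x hx => by rw [← Γ.hmount i hi x hx]; exact hlow x)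
      (fun x hx => by rw [← Γ.hmount i hi x hx]; exact hup x)
  -- value at a j
  have hγaj : Γ.toFun (Γ.a j) = Γ.η j / ((Γ.a j - Γ.ξ j) ^ 2 + Γ.η j ^ 2) :=
    Γ.hmount j hj (Γ.a j) ⟨le_refl _, habj⟩
  -- reduce to the cleared-denominator inequalities
  suffices h : Γ.η j * (a * Γ.d ^ 2) ≤ A * (Γ.c2 ^ 2 + 1) * Γ.η i ∧
      Γ.η i * (a * Γ.d ^ 2) ≤ A * (Γ.c2 ^ 2 + 1) * Γ.η j by
    constructor
    · rw [div_le_iff₀ hηi.1, div_mul_eq_mul_div, le_div_iff₀ hadpos]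
      exact h.1
    · rw [div_le_iff₀ hηj.1, div_mul_eq_mul_div, le_div_iff₀ hadpos]
      exact h.2
  rcases eq_or_lt_of_le (Γ.hord i hi j hj hij) with heq | hlt
  · -- junction: b i = a j
    have hγbi : Γ.toFun (Γ.b i) = Γ.η j / ((Γ.a j - Γ.ξ j) ^ 2 + Γ.η j ^ 2) := by
      rw [heq]; exact hγaj
    have h1 : a * (Γ.η i / ((Γ.b i - Γ.ξ i) ^ 2 + Γ.η i ^ 2)) ≤
        A * (Γ.η j / ((Γ.a j - Γ.ξ j) ^ 2 + Γ.η j ^ 2)) := by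
      refine Hi.1.trans ?_
      have := hup (Γ.b i); rwa [hγbi] at this
    have h2 : a * (Γ.η j / ((Γ.a j - Γ.ξ j) ^ 2 + Γ.η j ^ 2)) ≤
        A * (Γ.η i / ((Γ.b i - Γ.ξ i) ^ 2 + Γ.η i ^ 2)) := by
      refine le_trans ?_ Hi.2
      have := hlow (Γ.b i); rwa [hγbi] at this
    -- clear denominators
    rw [← mul_div_assoc, ← mul_div_assoc, div_le_div_iff₀ hDi hDj] at h1
    rw [← mul_div_assoc, ← mul_div_assoc, div_le_div_iff₀ hDj hDi] at h2
    constructor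
    · linarith [h2, mul_nonneg (mul_nonneg ha.le hηj.1.le) (sub_nonneg.2 hDige),
        mul_nonneg (mul_nonneg hA.le hηi.1.le) (sub_nonneg.2 hDjle)]
    · linarith [h1, mul_nonneg (mul_nonneg ha.le hηi.1.le) (sub_nonneg.2 hDjge),
        mul_nonneg (mul_nonneg hA.le hηj.1.le) (sub_nonneg.2 hDile)]
  · -- gap: b i < a j, plateau in between
    have hgap : ∀ x, Γ.b i ≤ x → x < Γ.a j → Γ.toFun x = 1 := by
      intro x hx1 hx2
      apply Γ.hplateau
      intro hx
      simp only [Set.mem_iUnion, Set.mem_Ico] at hx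
      obtain ⟨k, hk, h1, h2⟩ := hx
      rcases lt_trichotomy k j with hkj | hkj | hkj
      · rcases le_or_gt k i with hki | hki
        · rcases eq_or_lt_of_le hki with heq | hki
          · subst heq; linarith
          · have := Γ.hord k hk i hi hki
            linarith
        · exact hcons k hk ⟨hki, hkj⟩
      · subst hkj; linarith
      · have := Γ.hord j hj k hk hkj
        linarith
    -- at b i, γ = 1, so a ≤ f (b i) pointwise
    have hγbi : Γ.toFun (Γ.b i) = 1 := hgap (Γ.b i) le_rfl hlt
    have hfbi : a ≤ f (Γ.b i) := by
      have := hlow (Γ.b i); rwa [hγbi, mul_one] at this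
    have hi1 : a ≤ A * (Γ.η i / ((Γ.b i - Γ.ξ i) ^ 2 + Γ.η i ^ 2)) :=
      hfbi.trans Hi.2
    -- at a j: left limit over the plateau (Ioo (b i) (a j)) gives a ≤ f (a j)
    have hne2 : (nhdsWithin (Γ.a j) (Set.Ioo (Γ.b i) (Γ.a j))).NeBot := by
      rw [← mem_closure_iff_nhdsWithin_neBot, closure_Ioo (ne_of_lt hlt)]
      exact Set.right_mem_Icc.mpr hlt.le
    have Hj : a * (1:ℝ) ≤ f (Γ.a j) ∧ f (Γ.a j) ≤ A * (1:ℝ) := by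
      have := aux_limit (g := fun _ => (1:ℝ)) hf continuous_const hne2
        (fun x hx => by
          have := hlow x; rwa [hgap x hx.1.le hx.2] at this)
        (fun x hx => by
          have := hup x; rwa [hgap x hx.1.le hx.2] at this)
      exact this
    have hj1 : a ≤ A * (Γ.η j / ((Γ.a j - Γ.ξ j) ^ 2 + Γ.η j ^ 2)) := by
      have h := (hup (Γ.a j))
      rw [hγaj] at h
      linarith [Hj.1]
    -- deduce a * d^2 ≤ A * η
    have hi2 : a * Γ.d ^ 2 ≤ A * Γ.η i := by
      rw [← mul_div_assoc, le_div_iff₀ hDi] at hi1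
      linarith [mul_nonneg ha.le (sub_nonneg.2 hDige)]
    have hj2 : a * Γ.d ^ 2 ≤ A * Γ.η j := by
      rw [← mul_div_assoc, le_div_iff₀ hDj] at hj1
      linarith [mul_nonneg ha.le (sub_nonneg.2 hDjge)]
    constructor
    · have e1 : Γ.η j * (a * Γ.d ^ 2) ≤ a * Γ.d ^ 2 :=
        mul_le_of_le_one_left hadpos.le hηj.2
      have e2 : (0:ℝ) ≤ A * Γ.c2 ^ 2 * Γ.η i :=
        mul_nonneg (mul_nonneg hA.le (sq_nonneg _)) hηi.1.le
      linarith
    · have e1 : Γ.η i * (a * Γ.d ^ 2) ≤ a * Γ.d ^ 2 :=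
        mul_le_of_le_one_left hadpos.le hηi.2
      have e2 : (0:ℝ) ≤ A * Γ.c2 ^ 2 * Γ.η j :=
        mul_nonneg (mul_nonneg hA.le (sq_nonneg _)) hηj.1.le
      linarith
end

section
/- Let p_L be the polygonal line interpolating the points (jL, ½ log σ(jL)), j ∈ ℤ, where ½|log σ(x) − log σ(x')| ≤ C|x−x'|^{1−ε} for |x−x'| ≥ L₀. If L ≥ L₀ and |x − x'| ≥ 3L, then for f_L = ρ * p_L (ρ ≥ 0 smooth, supported in an interval of length < L, ∫ρ = 1) one has |f_L(x) − f_L(x')| ≤ 4C|x − x'|^{1−ε}. -/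
open MeasureTheory

/-- Convex-combination bound for the piecewise-linear interpolation. -/
lemma stmt17_interp (g : ℝ → ℝ) (L M : ℝ) (a b : ℝ) (j k : ℤ)
    (hja : (j : ℝ) * L ≤ a) (hja' : a ≤ ((j : ℝ) + 1) * L)
    (hkb : (k : ℝ) * L ≤ b) (hkb' : b ≤ ((k : ℝ) + 1) * L)
    (hL : 0 < L) (pa pb : ℝ)
    (hpa : pa = (((j : ℝ) + 1) - a / L) * g ((j : ℝ) * L) +
      (a / L - (j : ℝ)) * g (((j : ℝ) + 1) * L))
    (hpb : pb = (((k : ℝ) + 1) - b / L) * g ((k : ℝ) * L) +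
      (b / L - (k : ℝ)) * g (((k : ℝ) + 1) * L))
    (pair : ∀ y z : ℝ, |y - a| ≤ L → |z - b| ≤ L → |g y - g z| ≤ M) :
    |pa - pb| ≤ M := by
  have hlam1 : 0 ≤ ((j : ℝ) + 1) - a / L := by
    have : a / L ≤ (j : ℝ) + 1 := (div_le_iff₀ hL).mpr (by linarith)
    linarith
  have hlam2 : 0 ≤ a / L - (j : ℝ) := by
    have : (j : ℝ) ≤ a / L := (le_div_iff₀ hL).mpr hja
    linarith
  have hmu1 : 0 ≤ ((k : ℝ) + 1) - b / L := by
    have : b / L ≤ (k : ℝ) + 1 := (div_le_iff₀ hL).mpr (by linarith)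
    linarith
  have hmu2 : 0 ≤ b / L - (k : ℝ) := by
    have : (k : ℝ) ≤ b / L := (le_div_iff₀ hL).mpr hkb
    linarith
  have e1 : |(j : ℝ) * L - a| ≤ L := abs_le.mpr ⟨by linarith, by linarith⟩
  have e2 : |((j : ℝ) + 1) * L - a| ≤ L := abs_le.mpr ⟨by linarith, by linarith⟩
  have e3 : |(k : ℝ) * L - b| ≤ L := abs_le.mpr ⟨by linarith, by linarith⟩
  have e4 : |((k : ℝ) + 1) * L - b| ≤ L := abs_le.mpr ⟨by linarith, by linarith⟩
  obtain ⟨d11l, d11u⟩ := abs_le.mp (pair _ _ e1 e3)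
  obtain ⟨d12l, d12u⟩ := abs_le.mp (pair _ _ e1 e4)
  obtain ⟨d21l, d21u⟩ := abs_le.mp (pair _ _ e2 e3)
  obtain ⟨d22l, d22u⟩ := abs_le.mp (pair _ _ e2 e4)
  set gA1 := g ((j : ℝ) * L)
  set gA2 := g (((j : ℝ) + 1) * L)
  set gB1 := g ((k : ℝ) * L)
  set gB2 := g (((k : ℝ) + 1) * L)
  have hAu : pa ≤ max gA1 gA2 := by
    rw [hpa]
    have m1 := mul_le_mul_of_nonneg_left (le_max_left gA1 gA2) hlam1
    have m2 := mul_le_mul_of_nonneg_left (le_max_right gA1 gA2) hlam2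
    linarith
  have hAl : min gA1 gA2 ≤ pa := by
    rw [hpa]
    have m1 := mul_le_mul_of_nonneg_left (min_le_left gA1 gA2) hlam1
    have m2 := mul_le_mul_of_nonneg_left (min_le_right gA1 gA2) hlam2
    linarith
  have hBu : pb ≤ max gB1 gB2 := by
    rw [hpb]
    have m1 := mul_le_mul_of_nonneg_left (le_max_left gB1 gB2) hmu1
    have m2 := mul_le_mul_of_nonneg_left (le_max_right gB1 gB2) hmu2
    linarith
  have hBl : min gB1 gB2 ≤ pb := by
    rw [hpb]
    have m1 := mul_le_mul_of_nonneg_left (min_le_left gB1 gB2) hmu1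
    have m2 := mul_le_mul_of_nonneg_left (min_le_right gB1 gB2) hmu2
    linarith
  have hub : max gA1 gA2 - min gB1 gB2 ≤ M := by
    rcases max_cases gA1 gA2 with ⟨h1, _⟩ | ⟨h1, _⟩ <;>
      rcases min_cases gB1 gB2 with ⟨h2, _⟩ | ⟨h2, _⟩ <;> rw [h1, h2] <;> linarith
  have hlb : -M ≤ min gA1 gA2 - max gB1 gB2 := by
    rcases min_cases gA1 gA2 with ⟨h1, _⟩ | ⟨h1, _⟩ <;>
      rcases max_cases gB1 gB2 with ⟨h2, _⟩ | ⟨h2, _⟩ <;> rw [h1, h2] <;> linarith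
  exact abs_le.mpr ⟨by linarith, by linarith⟩

/-- Measurability of the piecewise-linear interpolation. -/
lemma stmt17_meas (L : ℝ) (hL : 0 < L) (pL : ℝ → ℝ) (G : ℤ → ℝ)
    (h : ∀ y : ℝ, pL y = (((⌊y / L⌋ : ℝ) + 1) - y / L) * G ⌊y / L⌋ +
      (y / L - (⌊y / L⌋ : ℝ)) * G (⌊y / L⌋ + 1)) : Measurable pL := by
  have hdiv : Measurable fun y : ℝ => y / L := measurable_id.div_const L
  have hfl : Measurable fun y : ℝ => ⌊y / L⌋ := hdiv.floor
  have hc : Measurable fun y : ℝ => ((⌊y / L⌋ : ℤ) : ℝ) :=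
    (Measurable.of_discrete (f := (Int.cast : ℤ → ℝ))).comp hfl
  have hG1 : Measurable fun y : ℝ => G ⌊y / L⌋ :=
    (Measurable.of_discrete (f := G)).comp hfl
  have hG2 : Measurable fun y : ℝ => G (⌊y / L⌋ + 1) :=
    (Measurable.of_discrete (f := fun n : ℤ => G (n + 1))).comp hfl
  have hrep : pL = fun y => (((⌊y / L⌋ : ℝ) + 1) - y / L) * G ⌊y / L⌋ +
      (y / L - (⌊y / L⌋ : ℝ)) * G (⌊y / L⌋ + 1) := funext h
  rw [hrep]
  exact (((hc.add measurable_const).sub hdiv).mul hG1).add ((hdiv.sub hc).mul hG2)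

theorem stmt17 (σ : ℝ → ℝ) (C ε L L₀ : ℝ) (pL fL ρ : ℝ → ℝ) (u v : ℝ)
    (hσ : ∀ x, 0 < σ x) (hC : 0 < C) (hε : 0 < ε) (hε1 : ε < 1)
    (hL₀ : 0 < L₀) (hL : L₀ ≤ L)
    (hHolder : ∀ x x' : ℝ, L₀ ≤ |x - x'| →
      (1 / 2) * |Real.log (σ x) - Real.log (σ x')| ≤ C * |x - x'| ^ (1 - ε))
    (hpL : ∀ j : ℤ, ∀ x ∈ Set.Icc ((j : ℝ) * L) (((j : ℝ) + 1) * L),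
      pL x = (((j : ℝ) + 1) - x / L) * ((1 / 2) * Real.log (σ ((j : ℝ) * L))) +
        (x / L - (j : ℝ)) * ((1 / 2) * Real.log (σ (((j : ℝ) + 1) * L))))
    (hρ : ContDiff ℝ (⊤ : ℕ∞) ρ) (hρ0 : ∀ t, 0 ≤ ρ t)
    (hsupp : tsupport ρ ⊆ Set.Icc u v) (huv : v - u < L)
    (hρint : (∫ t : ℝ, ρ t) = 1)
    (hfL : ∀ x : ℝ, fL x = ∫ t : ℝ, ρ t * pL (x - t)) :
    ∀ x x' : ℝ, 3 * L ≤ |x - x'| → |fL x - fL x'| ≤ 4 * C * |x - x'| ^ (1 - ε) := by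
  intro x x' hxx'
  have hL0 : 0 < L := lt_of_lt_of_le hL₀ hL
  have hmem : ∀ y : ℝ, (⌊y / L⌋ : ℝ) * L ≤ y ∧ y ≤ ((⌊y / L⌋ : ℝ) + 1) * L := by
    intro y
    constructor
    · exact (le_div_iff₀ hL0).mp (Int.floor_le _)
    · exact (div_le_iff₀ hL0).mp (le_of_lt (Int.lt_floor_add_one _))
  set M : ℝ := C * (|x - x'| + 2 * L) ^ (1 - ε) with hMdef
  have pair : ∀ a b : ℝ, a - b = x - x' → ∀ y z : ℝ, |y - a| ≤ L → |z - b| ≤ L →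
      |(1 / 2) * Real.log (σ y) - (1 / 2) * Real.log (σ z)| ≤ M := by
    intro a b hab y z hy hz
    have habxx : |a - b| = |x - x'| := by rw [hab]
    have hy' : |a - y| ≤ L := by rw [abs_sub_comm]; exact hy
    have hz' : |b - z| ≤ L := by rw [abs_sub_comm]; exact hz
    have h1 : |y - z| ≤ |x - x'| + 2 * L := by
      have t1 : |y - z| ≤ |y - a| + |a - z| := abs_sub_le _ _ _
      have t2 : |a - z| ≤ |a - b| + |b - z| := abs_sub_le _ _ _
      linarith
    have h2 : L₀ ≤ |y - z| := by
      have t1 : |a - b| ≤ |a - y| + |y - b| := abs_sub_le _ _ _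
      have t2 : |y - b| ≤ |y - z| + |z - b| := abs_sub_le _ _ _
      linarith
    have h3 := hHolder y z h2
    have h4 : |(1 / 2) * Real.log (σ y) - (1 / 2) * Real.log (σ z)| =
        (1 / 2) * |Real.log (σ y) - Real.log (σ z)| := by
      rw [show (1 / 2) * Real.log (σ y) - (1 / 2) * Real.log (σ z) =
        (1 / 2) * (Real.log (σ y) - Real.log (σ z)) from by ring, abs_mul]
      norm_num
    rw [h4, hMdef]
    refine le_trans h3 ?_
    have h5 : |y - z| ^ (1 - ε) ≤ (|x - x'| + 2 * L) ^ (1 - ε) :=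
      Real.rpow_le_rpow (abs_nonneg _) h1 (by linarith)
    exact mul_le_mul_of_nonneg_left h5 hC.le
  have key : ∀ t : ℝ, |pL (x - t) - pL (x' - t)| ≤ M := by
    intro t
    have ha := hmem (x - t)
    have hb := hmem (x' - t)
    exact stmt17_interp (fun y => (1 / 2) * Real.log (σ y)) L M (x - t) (x' - t)
      ⌊(x - t) / L⌋ ⌊(x' - t) / L⌋ ha.1 ha.2 hb.1 hb.2 hL0 _ _
      (hpL _ _ ⟨ha.1, ha.2⟩) (hpL _ _ ⟨hb.1, hb.2⟩)
      (pair (x - t) (x' - t) (by ring))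
  have hmeas : Measurable pL := by
    apply stmt17_meas L hL0 pL (fun n : ℤ => (1 / 2) * Real.log (σ ((n : ℝ) * L)))
    intro y
    have h := hpL ⌊y / L⌋ y ⟨(hmem y).1, (hmem y).2⟩
    rw [h]
    push_cast
    ring_nf
  have hcs : HasCompactSupport ρ :=
    IsCompact.of_isClosed_subset isCompact_Icc (isClosed_tsupport ρ) hsupp
  have hρInt : Integrable ρ := hρ.continuous.integrable_of_hasCompactSupport hcs
  have hMnn : 0 ≤ M := by
    have : (0 : ℝ) ≤ (|x - x'| + 2 * L) ^ (1 - ε) :=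
      Real.rpow_nonneg (by positivity) _
    positivity
  have hmeasF : ∀ w : ℝ, Measurable fun t : ℝ => ρ t * pL (w - t) := fun w =>
    hρ.continuous.measurable.mul (hmeas.comp (measurable_const.sub measurable_id))
  have hbound : ∀ t, ‖ρ t * pL (x - t) - ρ t * pL (x' - t)‖ ≤ M * ρ t := by
    intro t
    rw [show ρ t * pL (x - t) - ρ t * pL (x' - t) =
      ρ t * (pL (x - t) - pL (x' - t)) from by ring, Real.norm_eq_abs, abs_mul,
      abs_of_nonneg (hρ0 t)]
    calc ρ t * |pL (x - t) - pL (x' - t)| ≤ ρ t * M :=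
          mul_le_mul_of_nonneg_left (key t) (hρ0 t)
      _ = M * ρ t := mul_comm _ _
  have hFG : Integrable (fun t => ρ t * pL (x - t) - ρ t * pL (x' - t)) :=
    (hρInt.const_mul M).mono' (((hmeasF x).sub (hmeasF x')).aestronglyMeasurable)
      (Filter.Eventually.of_forall hbound)
  have hfinal : M ≤ 4 * C * |x - x'| ^ (1 - ε) := by
    have h53 : |x - x'| + 2 * L ≤ 5 / 3 * |x - x'| := by linarith
    have h1 : (|x - x'| + 2 * L) ^ (1 - ε) ≤ (5 / 3 * |x - x'|) ^ (1 - ε) :=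
      Real.rpow_le_rpow (by positivity) h53 (by linarith)
    have h2 : (5 / 3 * |x - x'| : ℝ) ^ (1 - ε) =
        (5 / 3 : ℝ) ^ (1 - ε) * |x - x'| ^ (1 - ε) :=
      Real.mul_rpow (by norm_num) (abs_nonneg _)
    have h3 : (5 / 3 : ℝ) ^ (1 - ε) ≤ (5 / 3 : ℝ) := by
      calc (5 / 3 : ℝ) ^ (1 - ε) ≤ (5 / 3 : ℝ) ^ (1 : ℝ) :=
            Real.rpow_le_rpow_of_exponent_le (by norm_num) (by linarith)
        _ = 5 / 3 := Real.rpow_one _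
    have h4 : (0 : ℝ) ≤ |x - x'| ^ (1 - ε) := Real.rpow_nonneg (abs_nonneg _) _
    rw [hMdef]
    calc C * (|x - x'| + 2 * L) ^ (1 - ε)
        ≤ C * ((5 / 3 * |x - x'|) ^ (1 - ε)) := mul_le_mul_of_nonneg_left h1 hC.le
      _ = C * ((5 / 3 : ℝ) ^ (1 - ε) * |x - x'| ^ (1 - ε)) := by rw [h2]
      _ ≤ C * (5 / 3 * |x - x'| ^ (1 - ε)) :=
          mul_le_mul_of_nonneg_left (mul_le_mul_of_nonneg_right h3 h4) hC.le
      _ ≤ 4 * C * |x - x'| ^ (1 - ε) := by nlinarith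
  rw [hfL x, hfL x']
  by_cases hInt : Integrable (fun t => ρ t * pL (x - t))
  · have hInt' : Integrable (fun t => ρ t * pL (x' - t)) := by
      exact (hInt.sub hFG).congr (Filter.Eventually.of_forall fun t => by
        simp only [Pi.sub_apply]; ring)
    rw [← integral_sub hInt hInt']
    calc |∫ t, (ρ t * pL (x - t) - ρ t * pL (x' - t))|
        ≤ ∫ t, |ρ t * pL (x - t) - ρ t * pL (x' - t)| := by
          simpa [Real.norm_eq_abs] using
            norm_integral_le_integral_norm (μ := (volume : Measure ℝ))
              (fun t => ρ t * pL (x - t) - ρ t * pL (x' - t))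
      _ ≤ ∫ t, M * ρ t := by
          refine integral_mono hFG.abs (hρInt.const_mul M) (fun t => ?_)
          simpa [Real.norm_eq_abs] using hbound t
      _ = M := by rw [integral_const_mul, hρint, mul_one]
      _ ≤ 4 * C * |x - x'| ^ (1 - ε) := hfinal
  · have hInt' : ¬ Integrable (fun t => ρ t * pL (x' - t)) := by
      intro h
      apply hInt
      exact (h.add hFG).congr (Filter.Eventually.of_forall fun t => by
        simp only [Pi.add_apply]; ring)
    rw [integral_undef hInt, integral_undef hInt']
    simpa using (by positivity : (0 : ℝ) ≤ 4 * C * |x - x'| ^ (1 - ε))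
end

section
/- Let Λ ⊂ the closed upper half-plane be interpolating for the Paley–Wiener space L²_{πτ}, let Σ ⊂ ℂ be interpolating for L²_{πτ}, and suppose Λ is complete interpolating for the annihilator L²_{πτ}[Σ] = {f ∈ L²_{πτ} : f|_Σ = 0}. Then Λ ∪ Σ is complete interpolating for L²_{πτ}. -/
/-!
Interpolate the data on `S` by some `g ∈ L²_{πτ}`; by Plancherel–Pólya the residual data
`c - g` on `Λ` is admissible, so it is interpolated by some `h ∈ L²_{πτ}[S]`, and `g + h`
interpolates `c` on `Λ ∪ S`. The difference of two solutions lies in `L²_{πτ}[S]` and vanishes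
on `Λ`, so it is zero by uniqueness of the interpolant of the zero data on `Λ`.
-/

open MeasureTheory

/-- Membership in the classical Paley–Wiener space `L²_{πτ}`: entire, of exponential
type at most `πτ`, and square integrable on the real axis. -/
def IsPW (τ : ℝ) (f : ℂ → ℂ) : Prop :=
  Differentiable ℂ f ∧
  (∀ ε > (0 : ℝ), ∃ Cε : ℝ, ∀ z : ℂ,
    ‖f z‖ ≤ Cε * Real.exp ((Real.pi * τ + ε) * ‖z‖)) ∧
  MeasureTheory.Integrable (fun x : ℝ => ‖f (x : ℂ)‖ ^ 2)

/-- Admissible interpolation data on `Γ`. -/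
def IsL2Data (Γ : Set ℂ) (c : Γ → ℂ) : Prop :=
  Summable (fun γ : Γ => ‖c γ‖ ^ 2 * (1 + |(γ : ℂ).im|))

/-- `Γ` is interpolating for `L²_{πτ}`. -/
def IsInterpolating (τ : ℝ) (Γ : Set ℂ) : Prop :=
  ∀ c : Γ → ℂ, IsL2Data Γ c → ∃ f : ℂ → ℂ, IsPW τ f ∧ ∀ γ : Γ, f γ = c γ

namespace IsPW

variable {τ : ℝ} {f g : ℂ → ℂ}

theorem zero (τ : ℝ) : IsPW τ 0 :=
  ⟨differentiable_const 0, fun _ _ => ⟨0, fun z => by simp⟩, by simp⟩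

theorem memLp_two (hf : IsPW τ f) : MemLp (fun x : ℝ => f x) 2 :=
  (memLp_two_iff_integrable_sq_norm
    (hf.1.continuous.comp Complex.continuous_ofReal).aestronglyMeasurable).2 hf.2.2

theorem of_memLp_two (hf : Differentiable ℂ f)
    (htype : ∀ ε > (0 : ℝ), ∃ Cε : ℝ, ∀ z : ℂ,
      ‖f z‖ ≤ Cε * Real.exp ((Real.pi * τ + ε) * ‖z‖))
    (hL2 : MemLp (fun x : ℝ => f x) 2) : IsPW τ f :=
  ⟨hf, htype, (memLp_two_iff_integrable_sq_norm hL2.1).1 hL2⟩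

theorem add (hf : IsPW τ f) (hg : IsPW τ g) : IsPW τ (f + g) := by
  refine of_memLp_two (hf.1.add hg.1) (fun ε hε => ?_) (hf.memLp_two.add hg.memLp_two)
  obtain ⟨C₁, hC₁⟩ := hf.2.1 ε hε
  obtain ⟨C₂, hC₂⟩ := hg.2.1 ε hε
  refine ⟨C₁ + C₂, fun z => ?_⟩
  calc ‖f z + g z‖ ≤ ‖f z‖ + ‖g z‖ := norm_add_le _ _
    _ ≤ (C₁ + C₂) * Real.exp ((Real.pi * τ + ε) * ‖z‖) := by
      rw [add_mul]; exact add_le_add (hC₁ z) (hC₂ z)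

theorem neg (hf : IsPW τ f) : IsPW τ (-f) := by
  refine of_memLp_two hf.1.neg (fun ε hε => ?_) hf.memLp_two.neg
  simpa only [Pi.neg_apply, norm_neg] using hf.2.1 ε hε

theorem sub (hf : IsPW τ f) (hg : IsPW τ g) : IsPW τ (f - g) := by
  simpa only [sub_eq_add_neg] using hf.add hg.neg

end IsPW

namespace IsL2Data

theorem restrict {Γ Γ' : Set ℂ} (hΓ : Γ ⊆ Γ') {c : Γ' → ℂ} (hc : IsL2Data Γ' c) :
    IsL2Data Γ (c ∘ Set.inclusion hΓ) :=
  hc.comp_injective (Set.inclusion_injective hΓ)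

theorem sub {Γ : Set ℂ} {c d : Γ → ℂ} (hc : IsL2Data Γ c) (hd : IsL2Data Γ d) :
    IsL2Data Γ (c - d) := by
  refine Summable.of_nonneg_of_le (fun γ => by positivity) (fun γ => ?_)
    ((hc.add hd).mul_left 2)
  have hsq : ‖c γ - d γ‖ ^ 2 ≤ 2 * (‖c γ‖ ^ 2 + ‖d γ‖ ^ 2) :=
    (pow_le_pow_left₀ (norm_nonneg _) (norm_sub_le _ _) 2).trans add_sq_le
  calc ‖c γ - d γ‖ ^ 2 * (1 + |(γ : ℂ).im|)
      ≤ 2 * (‖c γ‖ ^ 2 + ‖d γ‖ ^ 2) * (1 + |(γ : ℂ).im|) := by gcongr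
    _ = 2 * (‖c γ‖ ^ 2 * (1 + |(γ : ℂ).im|) + ‖d γ‖ ^ 2 * (1 + |(γ : ℂ).im|)) := by ring

end IsL2Data

/-- `Λ` is complete interpolating for the annihilator `L²_{πτ}[S]` of `S`. -/
def IsCompleteInterpolatingAnnihilator (τ : ℝ) (Λ S : Set ℂ) : Prop :=
  ∀ c : Λ → ℂ, IsL2Data Λ c →
    ∃! f : ℂ → ℂ, (IsPW τ f ∧ ∀ s ∈ S, f s = 0) ∧ ∀ γ : Λ, f γ = c γ

section Union

variable {τ : ℝ} {Λ S : Set ℂ}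

theorem IsCompleteInterpolatingAnnihilator.eq_of_eqOn_union
    (hcomp : IsCompleteInterpolatingAnnihilator τ Λ S) {f₁ f₂ : ℂ → ℂ}
    (hf₁ : IsPW τ f₁) (hf₂ : IsPW τ f₂) (heq : Set.EqOn f₁ f₂ (Λ ∪ S)) : f₁ = f₂ := by
  obtain ⟨u, -, hu⟩ := hcomp 0 (by simp [IsL2Data])
  have hdiff : f₁ - f₂ = u :=
    hu _ ⟨⟨hf₁.sub hf₂, fun s hs => sub_eq_zero.2 (heq (Or.inr hs))⟩,
      fun γ => sub_eq_zero.2 (heq (Or.inl γ.2))⟩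
  have hzero : 0 = u := hu _ ⟨⟨IsPW.zero τ, fun _ _ => rfl⟩, fun _ => rfl⟩
  exact sub_eq_zero.1 (hdiff.trans hzero.symm)

theorem IsCompleteInterpolatingAnnihilator.exists_interpolating_union
    (hcomp : IsCompleteInterpolatingAnnihilator τ Λ S) (hS : IsInterpolating τ S)
    (hPPΛ : ∀ f : ℂ → ℂ, IsPW τ f → IsL2Data Λ (fun γ : Λ => f γ))
    {c : ↥(Λ ∪ S) → ℂ} (hc : IsL2Data (Λ ∪ S) c) :
    ∃ f : ℂ → ℂ, IsPW τ f ∧ ∀ γ : ↥(Λ ∪ S), f γ = c γ := by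
  obtain ⟨g, hg, hgS⟩ := hS _ (hc.restrict Set.subset_union_right)
  obtain ⟨h, ⟨⟨hh, hhS⟩, hhΛ⟩, -⟩ :=
    hcomp _ ((hc.restrict Set.subset_union_left).sub (hPPΛ g hg))
  refine ⟨g + h, hg.add hh, ?_⟩
  rintro ⟨γ, hγΛ | hγS⟩
  · have := hhΛ ⟨γ, hγΛ⟩
    simp only [Function.comp_apply, Pi.sub_apply, Set.inclusion_mk] at this
    simp [this]
  · have := hgS ⟨γ, hγS⟩
    simp only [Function.comp_apply, Set.inclusion_mk] at this
    simp [this, hhS γ hγS]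

end Union

theorem stmt19_general (τ : ℝ) (Λ S : Set ℂ)
    (hΛ : IsInterpolating τ Λ) (hS : IsInterpolating τ S)
    (hPP : ∀ Γ : Set ℂ, IsInterpolating τ Γ →
      ∀ f : ℂ → ℂ, IsPW τ f → IsL2Data Γ (fun γ : Γ => f γ))
    (hcomp : ∀ c : Λ → ℂ, IsL2Data Λ c →
      ∃! f : ℂ → ℂ, (IsPW τ f ∧ ∀ s ∈ S, f s = 0) ∧ ∀ γ : Λ, f γ = c γ) :
    ∀ c : ↥(Λ ∪ S) → ℂ, IsL2Data (Λ ∪ S) c →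
      ∃! f : ℂ → ℂ, IsPW τ f ∧ ∀ γ : ↥(Λ ∪ S), f γ = c γ := by
  intro c hc
  obtain ⟨f, hf, hfc⟩ :=
    IsCompleteInterpolatingAnnihilator.exists_interpolating_union hcomp hS (hPP Λ hΛ) hc
  refine ⟨f, ⟨hf, hfc⟩, fun f' ⟨hf', hf'c⟩ => ?_⟩
  refine IsCompleteInterpolatingAnnihilator.eq_of_eqOn_union hcomp hf' hf fun z hz => ?_
  rw [hf'c ⟨z, hz⟩, hfc ⟨z, hz⟩]

theorem stmt19 (τ : ℝ) (hτ : 0 < τ) (Λ S : Set ℂ)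
    (hΛup : ∀ l ∈ Λ, 0 ≤ l.im)
    (hΛ : IsInterpolating τ Λ) (hS : IsInterpolating τ S)
    (hPP : ∀ Γ : Set ℂ, IsInterpolating τ Γ →
      ∀ f : ℂ → ℂ, IsPW τ f → IsL2Data Γ (fun γ : Γ => f γ))
    (hcomp : ∀ c : Λ → ℂ, IsL2Data Λ c →
      ∃! f : ℂ → ℂ, (IsPW τ f ∧ ∀ s ∈ S, f s = 0) ∧ ∀ γ : Λ, f γ = c γ) :
    ∀ c : ↥(Λ ∪ S) → ℂ, IsL2Data (Λ ∪ S) c →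
      ∃! f : ℂ → ℂ, IsPW τ f ∧ ∀ γ : ↥(Λ ∪ S), f γ = c γ :=
  stmt19_general τ Λ S hΛ hS hPP hcomp
end
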